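/- arXiv:1507.03126 — 16 statements merged into one kernel-verified Lean document; each statement's English description precedes it below -/
import Mathlib

section
/- If f : {0,1}^n → {−1,1} is ε-far from any k-junta, then for every set W ⊆ [n] with |W| ≤ k one has ∑_{T ⊆ [n], T ⊄ W} f̂(T)² ≥ ε (equivalently, the influence of the complement of W on f is at least ε). -/
open scoped Classical

noncomputable def sgnB (b : Bool) : ℝ := if b then -1 else 1

noncomputable def chi01 {n : ℕ} (S : Finset (Fin n)) (x : Fin n → Bool) : ℝ :=
  ∏ j ∈ S, sgnB (x j)

lemma chi01_eq {n : ℕ} (S : Finset (Fin n)) (x : Fin n → Bool) :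
    (-1 : ℝ) ^ (S.filter (fun j => x j = true)).card = chi01 S x := by
  rw [chi01]
  rw [show (∏ j ∈ S, sgnB (x j)) = ∏ j ∈ S, (if x j = true then (-1:ℝ) else 1) from
    Finset.prod_congr rfl (fun j _ => by simp [sgnB])]
  rw [Finset.prod_ite, Finset.prod_const, Finset.prod_const, one_pow, mul_one]

lemma sum_prod_bool {n : ℕ} (F : Fin n → Bool → ℝ) :
    ∑ x : Fin n → Bool, ∏ j : Fin n, F j (x j) = ∏ j : Fin n, (F j true + F j false) := by
  have := Finset.prod_univ_sum (fun _ : Fin n => (Finset.univ : Finset Bool)) F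
  rw [Fintype.piFinset_univ] at this
  rw [← this]
  exact Finset.prod_congr rfl (fun j _ => by rw [Fintype.sum_bool])

lemma sum_chi_mul {n : ℕ} (S T : Finset (Fin n)) :
    ∑ x : Fin n → Bool, chi01 S x * chi01 T x = if S = T then (2:ℝ)^n else 0 := by
  set F : Fin n → Bool → ℝ :=
    fun j b => (if j ∈ S then sgnB b else 1) * (if j ∈ T then sgnB b else 1) with hF
  have key : ∀ x : Fin n → Bool, chi01 S x * chi01 T x = ∏ j : Fin n, F j (x j) := by
    intro x
    simp only [hF]
    rw [Finset.prod_mul_distrib, chi01, chi01, Finset.prod_ite_mem, Finset.prod_ite_mem,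
      Finset.univ_inter, Finset.univ_inter]
  rw [Finset.sum_congr rfl (fun x _ => key x), sum_prod_bool]
  by_cases h : S = T
  · subst h
    rw [if_pos rfl]
    have : ∀ j : Fin n, F j true + F j false = 2 := by
      intro j
      by_cases hj : j ∈ S <;> simp [hF, hj, sgnB] <;> norm_num
    rw [Finset.prod_congr rfl (fun j _ => this j), Finset.prod_const]
    simp
  · rw [if_neg h]
    obtain ⟨j, hj⟩ : ∃ j, ¬(j ∈ S ↔ j ∈ T) := by
      by_contra hc
      push_neg at hc
      exact h (Finset.ext hc)
    apply Finset.prod_eq_zero (Finset.mem_univ j)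
    by_cases h1 : j ∈ S <;> by_cases h2 : j ∈ T <;>
      simp [hF, h1, h2, sgnB] at hj ⊢

lemma sum_chi_chi_all {n : ℕ} (x y : Fin n → Bool) :
    ∑ T : Finset (Fin n), chi01 T x * chi01 T y = if x = y then (2:ℝ)^n else 0 := by
  have key : ∀ T : Finset (Fin n), chi01 T x * chi01 T y = ∏ j ∈ T, (sgnB (x j) * sgnB (y j)) := by
    intro T; rw [chi01, chi01, Finset.prod_mul_distrib]
  rw [Finset.sum_congr rfl (fun T _ => key T), ← Finset.powerset_univ]
  have hadd := Finset.prod_add (fun j : Fin n => sgnB (x j) * sgnB (y j))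
      (fun _ : Fin n => (1:ℝ)) Finset.univ
  simp only [Finset.prod_const_one, mul_one] at hadd
  rw [← hadd]
  by_cases h : x = y
  · subst h
    rw [if_pos rfl]
    have : ∀ j : Fin n, sgnB (x j) * sgnB (x j) + 1 = 2 := by
      intro j; cases hxj : x j <;> simp [sgnB] <;> norm_num
    rw [Finset.prod_congr rfl (fun j _ => this j), Finset.prod_const]
    simp
  · rw [if_neg h]
    obtain ⟨j, hj⟩ : ∃ j, x j ≠ y j := by
      by_contra hc; push_neg at hc; exact h (funext hc)
    apply Finset.prod_eq_zero (Finset.mem_univ j)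
    cases hxj : x j <;> cases hyj : y j <;> simp_all [sgnB]

/-- The Fourier coefficient `f̂(S) = 2^{-n} ∑_x f(x) (-1)^{∑_{j∈S} x_j}` of a
function `f : {0,1}^n → ℝ`. -/
noncomputable def fourierCoef01 {n : ℕ} (f : (Fin n → Bool) → ℝ) (S : Finset (Fin n)) : ℝ :=
  (2^n : ℝ)⁻¹ * ∑ x : Fin n → Bool, f x * (-1 : ℝ) ^ (S.filter (fun j => x j = true)).card

theorem stmt0 (n k : ℕ) (ε : ℝ) (f : (Fin n → Bool) → ℝ)
    (hf : ∀ x, f x = 1 ∨ f x = -1)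
    (hfar : ∀ g : (Fin n → Bool) → ℝ, (∀ x, g x = 1 ∨ g x = -1) →
      (∃ W : Finset (Fin n), W.card ≤ k ∧
        ∀ x y : Fin n → Bool, (∀ i ∈ W, x i = y i) → g x = g y) →
      ε * 2^n ≤ ((Finset.univ.filter (fun x : Fin n → Bool => f x ≠ g x)).card : ℝ))
    (W : Finset (Fin n)) (hW : W.card ≤ k) :
    ε ≤ ∑ T ∈ Finset.univ.filter (fun T : Finset (Fin n) => ¬ T ⊆ W),
          (fourierCoef01 f T)^2 := by
  set c : ℝ := (2:ℝ)^n with hc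
  have hcpos : 0 < c := by positivity
  have hcne : c ≠ 0 := ne_of_gt hcpos
  have hfsq : ∀ x, f x ^ 2 = 1 := by
    intro x; rcases hf x with h | h <;> rw [h] <;> norm_num
  have hfh : ∀ T, fourierCoef01 f T = c⁻¹ * ∑ x, f x * chi01 T x := by
    intro T
    rw [fourierCoef01]
    congr 1
    exact Finset.sum_congr rfl (fun x _ => by rw [chi01_eq])
  have hsum_fchi : ∀ T, ∑ x, f x * chi01 T x = c * fourierCoef01 f T := by
    intro T; rw [hfh]; field_simp
  set fh : Finset (Fin n) → ℝ := fun T => fourierCoef01 f T with hfhdef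
  set s : ℝ := ∑ T ∈ W.powerset, (fh T)^2 with hs
  set A : (Fin n → Bool) → ℝ := fun x => ∑ T ∈ W.powerset, fh T * chi01 T x with hA
  -- ∑ x, f x * A x = c * s
  have hfA : ∑ x : Fin n → Bool, f x * A x = c * s := by
    calc ∑ x : Fin n → Bool, f x * A x
        = ∑ x : Fin n → Bool, ∑ T ∈ W.powerset, fh T * (f x * chi01 T x) := by
          refine Finset.sum_congr rfl fun x _ => ?_
          rw [show A x = ∑ T ∈ W.powerset, fh T * chi01 T x from rfl, Finset.mul_sum]
          exact Finset.sum_congr rfl fun T _ => by ring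
      _ = ∑ T ∈ W.powerset, ∑ x : Fin n → Bool, fh T * (f x * chi01 T x) := Finset.sum_comm
      _ = ∑ T ∈ W.powerset, fh T * (c * fh T) := by
          refine Finset.sum_congr rfl fun T _ => ?_
          rw [← Finset.mul_sum, hsum_fchi T]
      _ = c * s := by rw [hs, Finset.mul_sum]; exact Finset.sum_congr rfl fun T _ => by ring
  -- ∑ x, (A x)^2 = c * s
  have hAA : ∑ x : Fin n → Bool, (A x)^2 = c * s := by
    calc ∑ x : Fin n → Bool, (A x)^2
        = ∑ x : Fin n → Bool, ∑ T ∈ W.powerset, ∑ T' ∈ W.powerset,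
            (fh T * fh T') * (chi01 T x * chi01 T' x) := by
          refine Finset.sum_congr rfl fun x _ => ?_
          rw [show A x = ∑ T ∈ W.powerset, fh T * chi01 T x from rfl, sq, Finset.sum_mul_sum]
          exact Finset.sum_congr rfl fun T _ => Finset.sum_congr rfl fun T' _ => by ring
      _ = ∑ T ∈ W.powerset, ∑ T' ∈ W.powerset, ∑ x : Fin n → Bool,
            (fh T * fh T') * (chi01 T x * chi01 T' x) := by
          rw [Finset.sum_comm]
          exact Finset.sum_congr rfl fun T _ => Finset.sum_comm
      _ = ∑ T ∈ W.powerset, ∑ T' ∈ W.powerset,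
            (if T = T' then fh T * fh T' * c else 0) := by
          refine Finset.sum_congr rfl fun T _ => Finset.sum_congr rfl fun T' _ => ?_
          rw [← Finset.mul_sum, sum_chi_mul T T']
          split <;> ring
      _ = ∑ T ∈ W.powerset, fh T * fh T * c := by
          refine Finset.sum_congr rfl fun T hT => ?_
          rw [Finset.sum_ite_eq W.powerset T (fun T' => fh T * fh T' * c), if_pos hT]
      _ = c * s := by rw [hs, Finset.mul_sum]; exact Finset.sum_congr rfl fun T _ => by ring
  -- Parseval: total Fourier weight is 1
  have hpars : ∑ T : Finset (Fin n), (fh T)^2 = 1 := by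
    have card2 : ∑ x : Fin n → Bool, (1:ℝ) = c := by
      rw [Finset.sum_const, Finset.card_univ]
      simp [hc]
    calc ∑ T : Finset (Fin n), (fh T)^2
        = ∑ T : Finset (Fin n), ∑ x : Fin n → Bool, ∑ y : Fin n → Bool,
            (c⁻¹ * c⁻¹) * ((f x * f y) * (chi01 T x * chi01 T y)) := by
          refine Finset.sum_congr rfl fun T _ => ?_
          rw [show fh T = c⁻¹ * ∑ x : Fin n → Bool, f x * chi01 T x from hfh T,
            mul_pow, sq c⁻¹, sq, Finset.sum_mul_sum, Finset.mul_sum]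
          refine Finset.sum_congr rfl fun x _ => ?_
          rw [Finset.mul_sum]
          exact Finset.sum_congr rfl fun y _ => by ring
      _ = ∑ x : Fin n → Bool, ∑ y : Fin n → Bool, ∑ T : Finset (Fin n),
            (c⁻¹ * c⁻¹) * ((f x * f y) * (chi01 T x * chi01 T y)) := by
          rw [Finset.sum_comm]
          exact Finset.sum_congr rfl fun x _ => Finset.sum_comm
      _ = ∑ x : Fin n → Bool, ∑ y : Fin n → Bool,
            (if x = y then (c⁻¹ * c⁻¹) * (f x * f y * c) else 0) := by
          refine Finset.sum_congr rfl fun x _ => Finset.sum_congr rfl fun y _ => ?_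
          rw [← Finset.mul_sum, ← Finset.mul_sum, sum_chi_chi_all x y]
          split <;> ring
      _ = ∑ x : Fin n → Bool, (c⁻¹ * c⁻¹) * (f x * f x * c) := by
          refine Finset.sum_congr rfl fun x _ => ?_
          rw [Finset.sum_ite_eq Finset.univ x (fun y => (c⁻¹ * c⁻¹) * (f x * f y * c)),
            if_pos (Finset.mem_univ x)]
      _ = ∑ x : Fin n → Bool, c⁻¹ := by
          refine Finset.sum_congr rfl fun x _ => ?_
          rw [show f x * f x = f x ^ 2 from (sq (f x)).symm, hfsq x]
          field_simp
      _ = 1 := by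
          rw [Finset.sum_const, Finset.card_univ, nsmul_eq_mul]
          have hcard : ((Fintype.card (Fin n → Bool) : ℕ) : ℝ) = c := by simp [hc]
          rw [hcard]
          field_simp
  -- the junta g = sign of A
  set g : (Fin n → Bool) → ℝ := fun x => if 0 ≤ A x then 1 else -1 with hg
  have hgpm : ∀ x, g x = 1 ∨ g x = -1 := by
    intro x; by_cases h : 0 ≤ A x <;> simp [hg, h]
  have hjunta : ∀ x y : Fin n → Bool, (∀ i ∈ W, x i = y i) → g x = g y := by
    intro x y hxy
    have : A x = A y := by
      simp only [hA]
      refine Finset.sum_congr rfl fun T hT => ?_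
      have hTW : T ⊆ W := Finset.mem_powerset.mp hT
      congr 1
      exact Finset.prod_congr rfl fun j hj => by rw [hxy j (hTW hj)]
    simp [hg, this]
  have hcard := hfar g hgpm ⟨W, hW, hjunta⟩
  -- cast the disagreement count to a sum
  have hcount : ((Finset.univ.filter (fun x : Fin n → Bool => f x ≠ g x)).card : ℝ)
      = ∑ x : Fin n → Bool, (if f x ≠ g x then (1:ℝ) else 0) := by
    rw [Finset.card_filter]
    push_cast
    exact Finset.sum_congr rfl fun x _ => by split <;> norm_num
  -- pointwise bound
  have hpt : ∀ x, (if f x ≠ g x then (1:ℝ) else 0) ≤ (f x - A x)^2 := by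
    intro x
    by_cases hne : f x ≠ g x
    · rw [if_pos hne]
      rcases hf x with h1 | h1
      · have hAx : A x < 0 := by
          by_contra h0
          push_neg at h0
          exact hne (by rw [h1, hg]; simp [h0])
        nlinarith
      · have hAx : 0 ≤ A x := by
          by_contra h0
          exact hne (by rw [h1, hg]; simp [h0])
        nlinarith
    · rw [if_neg hne]; positivity
  -- combine
  have hsum : ∑ x : Fin n → Bool, (f x - A x)^2 = c - 2*(c*s) + c*s := by
    have expand : ∀ x : Fin n → Bool, (f x - A x)^2 = f x^2 - 2*(f x * A x) + (A x)^2 :=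
      fun x => by ring
    rw [Finset.sum_congr rfl (fun x _ => expand x), Finset.sum_add_distrib,
      Finset.sum_sub_distrib, ← Finset.mul_sum, hfA, hAA]
    congr 1
    congr 1
    rw [Finset.sum_congr rfl (fun x _ => hfsq x), Finset.sum_const, Finset.card_univ]
    simp [hc]
  have hle : ε * c ≤ c - 2*(c*s) + c*s := by
    calc ε * c ≤ _ := hcard
    _ = ∑ x : Fin n → Bool, (if f x ≠ g x then (1:ℝ) else 0) := hcount
    _ ≤ ∑ x : Fin n → Bool, (f x - A x)^2 := Finset.sum_le_sum fun x _ => hpt x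
    _ = _ := hsum
  have hε : ε ≤ 1 - s := by nlinarith
  -- identify the target sum with 1 - s
  have hsplit := Finset.sum_filter_add_sum_filter_not Finset.univ
    (fun T : Finset (Fin n) => T ⊆ W) (fun T => (fh T)^2)
  have hpows : Finset.univ.filter (fun T : Finset (Fin n) => T ⊆ W) = W.powerset := by
    ext T; simp [Finset.mem_powerset]
  rw [hpows, hpars] at hsplit
  have h2 : ε ≤ ∑ T ∈ Finset.univ.filter (fun T : Finset (Fin n) => ¬ T ⊆ W), (fh T)^2 := by
    linarith [hsplit, hε]
  exact h2
end

section
/- For all integers a, b with 0 ≤ a ≤ b, one has ∑_{j=0}^{a} ∏_{i=0}^{j−1} ((a−i)/(b−i)) = (b+1)/(b−a+1), where the empty product (j = 0) equals 1 and division is over the reals. -/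
/-!
Writing `T(a, x)` for the left-hand side, splitting off the factor `i = 0` of every product gives
`T(a + 1, x) = 1 + (a + 1) / x * T(a, x - 1)`, and `(x + 1) / (x - a + 1)` satisfies the same
recursion, so induction on `a` proves the identity in any field.
-/

open Finset

theorem prod_range_succ_sub_div_sub {K : Type*} [Field K] (a : ℕ) (x : K) (j : ℕ) :
    ∏ i ∈ range (j + 1), (((a + 1 : ℕ) : K) - i) / (x - i)
      = (∏ i ∈ range j, ((a : K) - i) / (x - 1 - i)) * ((a + 1) / x) := by
  rw [prod_range_succ']
  push_cast
  congr 1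
  · refine prod_congr rfl fun i _ => ?_
    ring_nf
  · simp

theorem sum_prod_sub_div_sub {K : Type*} [Field K] (a : ℕ) (x : K)
    (hx : ∀ i ≤ a, x + 1 - i ≠ 0) :
    ∑ j ∈ range (a + 1), ∏ i ∈ range j, ((a : K) - i) / (x - i) = (x + 1) / (x - a + 1) := by
  induction a generalizing x with
  | zero =>
    simpa using (div_self (by simpa using hx 0 le_rfl)).symm
  | succ a ih =>
    have hx0 : x ≠ 0 := by simpa using hx 1 (by omega)
    have hxa : x - a ≠ 0 := by simpa using hx (a + 1) le_rfl
    have ih' : ∑ j ∈ range (a + 1), ∏ i ∈ range j, ((a : K) - i) / (x - 1 - i) = x / (x - a) := by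
      convert ih (x - 1) (fun i hi => by simpa using hx (i + 1) (by omega)) using 2 <;> ring
    rw [sum_range_succ']
    simp only [prod_range_succ_sub_div_sub, ← sum_mul, ih', prod_range_zero]
    push_cast
    rw [show x - ((a : K) + 1) + 1 = x - a by ring]
    field_simp
    ring

theorem stmt1 (a b : ℕ) (hab : a ≤ b) :
    ∑ j ∈ Finset.range (a+1), ∏ i ∈ Finset.range j, (((a:ℝ) - i) / ((b:ℝ) - i))
      = ((b:ℝ) + 1) / ((b:ℝ) - (a:ℝ) + 1) := by
  refine sum_prod_sub_div_sub a (b : ℝ) fun i hi => ?_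
  have hib : (i : ℝ) ≤ b := by exact_mod_cast hi.trans hab
  linarith
end

section
/- Let n, k, d be integers with k ≥ 0, d ≥ 1 and n ≥ k + d, and let A, B ⊆ [n] with |A| = k and |B| = k + d. Then ∑_{s=1}^{n−k−d+1} |{S ⊆ [n] : |S| = s, S ∩ A = ∅, |S ∩ B| = 1}| / ((n−k)·C(n−k−1, s−1)) = 1, where C(·,·) denotes the binomial coefficient and division is over the reals. -/
/-!
A set `S` counted in the `s`-th term is `insert x T` with `x ∈ B \ A` and `T` an `(s - 1)`-subset
of `(A ∪ B)ᶜ`. With `b = |B \ A| ≥ d`, `c = |(A ∪ B)ᶜ| = n - k - b` and `N = n - k - 1`, the term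
for `s = j + 1` is therefore `b / (N + 1) * C(c, j) / C(N, j)`. Since
`C(c, j) / C(N, j) = C(N - j, N - c) / C(N, c)`, the hockey-stick identity gives
`∑ j, C(c, j) / C(N, j) = C(N + 1, N - c + 1) / C(N, c) = (N + 1) / (N + 1 - c) = (N + 1) / b`;
the range of `s` contains all `j ≤ c` because `b ≥ d`.
-/

open Finset

section Counting

variable {α : Type*} [DecidableEq α]

theorem insert_inter_eq_singleton_of_disjoint {x : α} {T B : Finset α}
    (hx : x ∈ B) (hT : Disjoint T B) : insert x T ∩ B = {x} := by
  rw [insert_inter_of_mem hx, disjoint_iff_inter_eq_empty.1 hT, insert_empty]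

variable [Fintype α]

theorem card_add_card_sdiff_add_card_compl (A B : Finset α) :
    #A + #(B \ A) + #(A ∪ B)ᶜ = Fintype.card α := by
  rw [add_comm #A, card_sdiff_add_card, union_comm, add_comm, card_compl_add_card]

theorem card_filter_inter_eq_empty_and_card_inter_eq_one (A B : Finset α) {s : ℕ} (hs : 1 ≤ s) :
    #{S : Finset α | #S = s ∧ S ∩ A = ∅ ∧ #(S ∩ B) = 1}
      = #(B \ A) * (#(A ∪ B)ᶜ).choose (s - 1) := by
  rw [← card_powersetCard, ← card_product]
  symm
  refine card_bij (fun p _ => insert p.1 p.2) ?_ ?_ ?_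
  · rintro ⟨x, T⟩ hp
    simp only [mem_product, mem_sdiff, mem_powersetCard, subset_compl_iff_disjoint_right,
      disjoint_union_right] at hp
    obtain ⟨⟨hxB, hxA⟩, ⟨hTA, hTB⟩, hT⟩ := hp
    have hxT : x ∉ T := fun h => disjoint_left.1 hTB h hxB
    simp only [mem_filter, mem_univ, true_and]
    refine ⟨by rw [card_insert_of_notMem hxT, hT, Nat.sub_add_cancel hs], ?_, ?_⟩
    · rw [← disjoint_iff_inter_eq_empty, disjoint_insert_left]
      exact ⟨hxA, hTA⟩
    · rw [insert_inter_eq_singleton_of_disjoint hxB hTB, card_singleton]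
  · rintro ⟨x, T⟩ hp ⟨x', T'⟩ hp' (heq : insert x T = insert x' T')
    simp only [mem_product, mem_sdiff, mem_powersetCard, subset_compl_iff_disjoint_right,
      disjoint_union_right] at hp hp'
    have hxx' : x = x' := by
      simpa [insert_inter_eq_singleton_of_disjoint hp.1.1 hp.2.1.2,
        insert_inter_eq_singleton_of_disjoint hp'.1.1 hp'.2.1.2] using congrArg (· ∩ B) heq
    subst hxx'
    have hTT' : T = T' := by
      simpa [insert_sdiff_of_mem _ hp.1.1, sdiff_eq_self_of_disjoint hp.2.1.2,
        insert_sdiff_of_mem _ hp'.1.1, sdiff_eq_self_of_disjoint hp'.2.1.2]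
        using congrArg (· \ B) heq
    rw [hTT']
  · intro S hS
    simp only [mem_filter, mem_univ, true_and] at hS
    obtain ⟨hcard, hSA, hSB⟩ := hS
    obtain ⟨a, ha⟩ := card_eq_one.1 hSB
    have haSB : a ∈ S ∩ B := ha ▸ mem_singleton_self a
    refine ⟨(a, S \ B), ?_, ?_⟩
    · simp only [mem_product, mem_sdiff, mem_powersetCard, subset_compl_iff_disjoint_right,
        disjoint_union_right]
      have hSA' : Disjoint S A := disjoint_iff_inter_eq_empty.2 hSA
      refine ⟨⟨(mem_inter.1 haSB).2, disjoint_left.1 hSA' (mem_inter.1 haSB).1⟩,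
        ⟨hSA'.mono_left sdiff_subset, sdiff_disjoint⟩, ?_⟩
      rw [card_sdiff, inter_comm, hSB, hcard]
    · rw [insert_eq, ← ha, union_comm, sdiff_union_inter]

end Counting

section Binomial

variable {K : Type*} [Field K] [CharZero K]

theorem choose_div_choose_eq_choose_sub_div_choose {N c j : ℕ} (hjc : j ≤ c) (hcN : c ≤ N) :
    (c.choose j : K) / N.choose j = (N - j).choose (N - c) / N.choose c := by
  have hNj : (N.choose j : K) ≠ 0 := Nat.cast_ne_zero.2 (Nat.choose_pos (hjc.trans hcN)).ne'
  have hNc : (N.choose c : K) ≠ 0 := Nat.cast_ne_zero.2 (Nat.choose_pos hcN).ne'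
  rw [div_eq_div_iff hNj hNc,
    ← Nat.choose_symm_of_eq_add (by omega : N - j = c - j + (N - c))]
  exact_mod_cast (mul_comm _ _).trans ((Nat.choose_mul hjc).trans (mul_comm _ _))

theorem Nat.sum_range_sub_choose_sub {N c : ℕ} (hcN : c ≤ N) :
    ∑ j ∈ range (c + 1), (N - j).choose (N - c) = (N + 1).choose (N - c + 1) := by
  rw [← sum_range_reflect]
  calc ∑ j ∈ range (c + 1), (N - (c + 1 - 1 - j)).choose (N - c)
      = ∑ j ∈ range (c + 1), (j + (N - c)).choose (N - c) :=
        sum_congr rfl fun j hj => by rw [mem_range] at hj; congr 1; omega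
    _ = (N + 1).choose (N - c + 1) := by rw [Nat.sum_range_add_choose]; congr 1; omega

theorem sum_range_choose_div_choose_mul {N c m : ℕ} (hcN : c ≤ N) (hcm : c < m) :
    (∑ j ∈ range m, (c.choose j : K) / N.choose j) * (N + 1 - c) = N + 1 := by
  have hvanish : ∀ j ∈ range m, j ∉ range (c + 1) → (c.choose j : K) / N.choose j = 0 :=
    fun j _ hj => by rw [Nat.choose_eq_zero_of_lt (by simpa using hj), Nat.cast_zero, zero_div]
  rw [← sum_subset (range_subset_range.2 hcm) hvanish,
    sum_congr rfl fun j hj => choose_div_choose_eq_choose_sub_div_choose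
      (Nat.lt_succ_iff.1 (mem_range.1 hj)) hcN,
    ← sum_div, ← Nat.cast_sum, Nat.sum_range_sub_choose_sub hcN]
  have hpascal : ((N + 1) * N.choose c : K) = (N + 1).choose (N - c + 1) * (N + 1 - c) := by
    have h := Nat.add_one_mul_choose_eq N (N - c)
    rw [Nat.choose_symm hcN] at h
    have hcast : ((N - c + 1 : ℕ) : K) = N + 1 - c := by push_cast [Nat.cast_sub hcN]; ring
    rw [← hcast]
    exact_mod_cast h
  have hNc : (N.choose c : K) ≠ 0 := Nat.cast_ne_zero.2 (Nat.choose_pos hcN).ne'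
  rw [div_mul_eq_mul_div, ← hpascal, mul_div_assoc, div_self hNc, mul_one]

end Binomial

theorem stmt2_general (n k d : ℕ) (hd : 1 ≤ d)
    (A B : Finset (Fin n)) (hA : A.card = k) (hB : B.card = k + d) :
    ∑ s ∈ Finset.Icc 1 (n - k - d + 1),
      ((Finset.univ.filter (fun S : Finset (Fin n) =>
          S.card = s ∧ S ∩ A = ∅ ∧ (S ∩ B).card = 1)).card : ℝ)
        / (((n:ℝ) - (k:ℝ)) * (Nat.choose (n - k - 1) (s - 1) : ℝ)) = 1 := by
  set b := #(B \ A)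
  set c := #(A ∪ B)ᶜ
  have hdb : d ≤ b := by have := le_card_sdiff A B; omega
  have hkbc : k + b + c = n :=
    hA ▸ (card_add_card_sdiff_add_card_compl A B).trans (Fintype.card_fin n)
  have hnk : ((n - k - 1 : ℕ) : ℝ) + 1 = n - k := by
    rw [← Nat.cast_add_one, Nat.sub_add_cancel (by omega), Nat.cast_sub (by omega)]
  have hnk0 : (n : ℝ) - k ≠ 0 := by rw [← hnk]; positivity
  have hterm : ∀ j ∈ range (n - k - d + 1),
      (#{S : Finset (Fin n) | #S = 1 + j ∧ S ∩ A = ∅ ∧ #(S ∩ B) = 1} : ℝ)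
        / ((n - k) * (n - k - 1).choose (1 + j - 1))
      = b / (n - k) * ((c.choose j : ℝ) / (n - k - 1).choose j) := fun j _ => by
    rw [card_filter_inter_eq_empty_and_card_inter_eq_one A B (by omega), Nat.add_sub_cancel_left,
      Nat.cast_mul, mul_div_mul_comm]
  have hsum := sum_range_choose_div_choose_mul (K := ℝ) (N := n - k - 1) (c := c)
    (m := n - k - d + 1) (by omega) (by omega)
  have hb : ((n - k - 1 : ℕ) : ℝ) + 1 - c = b := by rw [hnk, ← hkbc]; push_cast; ring
  rw [hb, hnk] at hsum
  rw [← Ico_add_one_right_eq_Icc, sum_Ico_eq_sum_range, Nat.add_sub_cancel, sum_congr rfl hterm,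
    ← mul_sum, div_mul_eq_mul_div, mul_comm, hsum, div_self hnk0]

theorem stmt2 (n k d : ℕ) (hd : 1 ≤ d) (hn : k + d ≤ n)
    (A B : Finset (Fin n)) (hA : A.card = k) (hB : B.card = k + d) :
    ∑ s ∈ Finset.Icc 1 (n - k - d + 1),
      ((Finset.univ.filter (fun S : Finset (Fin n) =>
          S.card = s ∧ S ∩ A = ∅ ∧ (S ∩ B).card = 1)).card : ℝ)
        / (((n:ℝ) - (k:ℝ)) * (Nat.choose (n - k - 1) (s - 1) : ℝ)) = 1 :=
  stmt2_general n k d hd A B hA hB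
end

section
/- There exists a universal constant C > 0 such that for all integers n, k, d with k ≥ 1, d ≥ 1 and n ≥ k + d, there exist positive reals α_s, β_s for s = 1, …, n−k−d+1 satisfying α_s·β_s = ((n−k)·C(n−k−1, s−1))^{−1} for every s, such that both ∑_{s=1}^{n−k−d+1} C(n−k, s)·α_s² ≤ C·√((k+d)/d) and ∑_{s=1}^{n−k−d+1} (k+d)·C(n−k−d, s−1)·β_s² ≤ C·√((k+d)/d). -/
/-!
Write `m = n - k`, `K = k + d`, `P s = (m * C(m-1, s-1))⁻¹` for the prescribed product,
`a s = C(m, s)` and `b s = K * C(m-d, s-1)`. The balanced choice `α s ^ 2 = P s * √(b s / a s)`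
makes both sums equal to `∑ P s * √(a s * b s)`. Since `s * C(m, s) = m * C(m-1, s-1)` and
`C(m-d, j) ≤ C(m-1, j) * ρ ^ j` with `ρ = (m-d)/(m-1)`, the `s`-th term is at most
`√(K/m) * √ρ ^ (s-1) / √s`. Splitting this sum at `T ≈ m/d`, the terms `s ≤ T` contribute at most
`2√T`, the others at most `(∑ √ρ ^ (s-1)) / √T`, and the geometric sum is `O(m/d)`: for `d = 1`
there are only `m` terms, and otherwise `1 - √ρ ≥ d/(4m)`. Altogether the bound is
`√(K/m) * O(√(m/d)) = O(√(K/d))`.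
-/

open Finset Real

theorem Nat.choose_mul_pow_le_choose_mul_pow {a b : ℕ} (hab : a ≤ b) (j : ℕ) :
    a.choose j * b ^ j ≤ b.choose j * a ^ j := by
  induction j with
  | zero => simp
  | succ j ih =>
    have hfactor : (a - j) * b ≤ (b - j) * a := by
      rcases le_or_gt j a with h | h
      · zify [h, h.trans hab]
        nlinarith
      · simp [Nat.sub_eq_zero_of_le h.le]
    refine Nat.le_of_mul_le_mul_right (c := j + 1) ?_ j.succ_pos
    calc a.choose (j + 1) * b ^ (j + 1) * (j + 1)
        = a.choose j * b ^ j * ((a - j) * b) := by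
          rw [mul_right_comm, Nat.choose_succ_right_eq]; ring
      _ ≤ b.choose j * a ^ j * ((b - j) * a) := Nat.mul_le_mul ih hfactor
      _ = b.choose (j + 1) * a ^ (j + 1) * (j + 1) := by
          rw [mul_right_comm _ _ (j + 1), Nat.choose_succ_right_eq]; ring

theorem Nat.cast_choose_le_cast_choose_mul_div_pow {a b : ℕ} (hab : a ≤ b) (j : ℕ) :
    (a.choose j : ℝ) ≤ b.choose j * ((a : ℝ) / b) ^ j := by
  rcases Nat.eq_zero_or_pos b with rfl | hb
  · obtain rfl : a = 0 := Nat.le_zero.mp hab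
    rcases j with _ | j <;> simp
  · rw [div_pow, mul_div_assoc', le_div_iff₀ (by positivity)]
    exact_mod_cast Nat.choose_mul_pow_le_choose_mul_pow hab j

theorem sum_Icc_inv_sqrt_le (N : ℕ) : ∑ s ∈ Icc 1 N, (√s)⁻¹ ≤ 2 * √N := by
  induction N with
  | zero => simp
  | succ n ih =>
    rw [sum_Icc_succ_top (by omega), Nat.cast_succ]
    have hpos : 0 < √((n : ℝ) + 1) := by positivity
    have hstep : (√((n : ℝ) + 1))⁻¹ ≤ 2 * √((n : ℝ) + 1) - 2 * √n := by
      rw [inv_le_iff_one_le_mul₀ hpos]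
      nlinarith [sq_sqrt (n.cast_nonneg' : (0:ℝ) ≤ n), sq_sqrt (by positivity : (0:ℝ) ≤ n + 1),
        sq_nonneg (√((n : ℝ) + 1) - √n)]
    linarith

theorem sum_Icc_pow_div_sqrt_le_split {q : ℝ} (hq0 : 0 ≤ q) (hq1 : q ≤ 1) {T : ℕ} (hT : 1 ≤ T)
    (N : ℕ) :
    ∑ s ∈ Icc 1 N, q ^ (s - 1) / √s ≤ 2 * √T + (∑ s ∈ Icc 1 N, q ^ (s - 1)) / √T := by
  rw [← sum_filter_add_sum_filter_not _ (· ≤ T), sum_div]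
  gcongr ?_ + ?_
  · calc ∑ s ∈ Icc 1 N with s ≤ T, q ^ (s - 1) / √s
        ≤ ∑ s ∈ Icc 1 N with s ≤ T, (√s)⁻¹ := sum_le_sum fun s _ => by
          rw [div_eq_mul_inv]
          exact mul_le_of_le_one_left (by positivity) (pow_le_one₀ hq0 hq1)
      _ ≤ ∑ s ∈ Icc 1 T, (√s)⁻¹ :=
          sum_le_sum_of_subset_of_nonneg
            (fun s hs => by simp only [mem_filter, mem_Icc] at hs ⊢; omega)
            fun _ _ _ => by positivity
      _ ≤ 2 * √T := sum_Icc_inv_sqrt_le T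
  · calc ∑ s ∈ Icc 1 N with ¬s ≤ T, q ^ (s - 1) / √s
        ≤ ∑ s ∈ Icc 1 N with ¬s ≤ T, q ^ (s - 1) / √T := sum_le_sum fun s hs => by
          simp only [mem_filter, mem_Icc, not_le] at hs
          gcongr
          exact_mod_cast hs.2.le
      _ ≤ ∑ s ∈ Icc 1 N, q ^ (s - 1) / √T :=
          sum_le_sum_of_subset_of_nonneg (filter_subset _ _) fun _ _ _ => by positivity

theorem sum_Icc_pow_div_sqrt_le {q x : ℝ} (hq0 : 0 ≤ q) (hq1 : q ≤ 1) (hx : 1 ≤ x) {N : ℕ}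
    (hgeom : ∑ s ∈ Icc 1 N, q ^ (s - 1) ≤ 4 * x) :
    ∑ s ∈ Icc 1 N, q ^ (s - 1) / √s ≤ 7 * √x := by
  set T := ⌈x⌉₊
  have hxT : x ≤ T := Nat.le_ceil x
  have hT2x : (T : ℝ) ≤ 2 * x := by linarith [Nat.ceil_lt_add_one (by linarith : 0 ≤ x)]
  have hsqrtx : 0 < √x := by positivity
  have hsqrtT : √x ≤ √T := sqrt_le_sqrt hxT
  have hsqrtT' : √T ≤ 3 / 2 * √x := by
    rw [sqrt_le_left (by positivity), mul_pow, sq_sqrt (by positivity)]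
    linarith
  calc ∑ s ∈ Icc 1 N, q ^ (s - 1) / √s
      ≤ 2 * √T + (∑ s ∈ Icc 1 N, q ^ (s - 1)) / √T :=
        sum_Icc_pow_div_sqrt_le_split hq0 hq1 (Nat.one_le_cast.mp (hx.trans hxT)) N
    _ ≤ 2 * (3 / 2 * √x) + 4 * x / √x := by gcongr
    _ = 7 * √x := by
      have := sq_sqrt (by positivity : 0 ≤ x)
      field_simp
      linarith

theorem sum_Icc_sqrt_ratio_pow_le {m d : ℕ} (hd : 1 ≤ d) (hdm : d ≤ m) :
    ∑ s ∈ Icc 1 (m - d + 1), √(((m - d : ℕ) : ℝ) / ((m - 1 : ℕ) : ℝ)) ^ (s - 1) ≤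
      4 * (m / d) := by
  set ρ : ℝ := ((m - d : ℕ) : ℝ) / ((m - 1 : ℕ) : ℝ) with hρ
  have hρ1 : ρ ≤ 1 :=
    div_le_one_of_le₀ (by exact_mod_cast (by omega : m - d ≤ m - 1)) (by positivity)
  have hq0 : 0 ≤ √ρ := sqrt_nonneg ρ
  have hq1 : √ρ ≤ 1 := sqrt_le_one.mpr hρ1
  rcases hd.eq_or_lt with rfl | hd2
  · calc ∑ s ∈ Icc 1 (m - 1 + 1), √ρ ^ (s - 1)
        ≤ ∑ s ∈ Icc 1 (m - 1 + 1), (1 : ℝ) := sum_le_sum fun _ _ => pow_le_one₀ hq0 hq1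
      _ ≤ 4 * (m / (1 : ℕ)) := by
        rw [Nat.sub_add_cancel hdm]
        simp only [sum_const, Nat.card_Icc, Nat.add_sub_cancel, nsmul_eq_mul, mul_one, Nat.cast_one,
          div_one]
        linarith [m.cast_nonneg (α := ℝ)]
  · have hm : (2 : ℝ) ≤ m := by exact_mod_cast hd2.trans_le hdm
    have hρgap : d / (2 * m) ≤ 1 - ρ := by
      have h1ρ : 1 - ρ = ((d : ℝ) - 1) / (m - 1) := by
        have : (m : ℝ) - 1 ≠ 0 := by linarith
        rw [hρ, Nat.cast_sub hdm, Nat.cast_sub (by omega), Nat.cast_one]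
        field_simp
        ring
      have hdR : (2 : ℝ) ≤ d := by exact_mod_cast hd2
      rw [h1ρ, div_le_div_iff₀ (by positivity) (by linarith)]
      nlinarith
    have hqgap : d / (4 * m) ≤ 1 - √ρ := by
      have : 1 - ρ ≤ 2 * (1 - √ρ) := by nlinarith [sq_sqrt (by positivity : 0 ≤ ρ)]
      rw [show (d : ℝ) / (4 * m) = d / (2 * m) / 2 by ring]
      linarith
    have hq1' : √ρ < 1 := by
      have : (0 : ℝ) < d / (4 * m) := by positivity
      linarith
    calc ∑ s ∈ Icc 1 (m - d + 1), √ρ ^ (s - 1)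
        = ∑ i ∈ range (m - d + 1), √ρ ^ i := by
          rw [← Ico_add_one_right_eq_Icc, sum_Ico_eq_sum_range]
          simp
      _ ≤ (1 - √ρ)⁻¹ := by simpa using geom_sum_Ico_le_of_lt_one (m := 0) hq0 hq1'
      _ ≤ ((d : ℝ) / (4 * m))⁻¹ := inv_anti₀ (by positivity) hqgap
      _ = 4 * (m / d) := by rw [inv_div]; ring

theorem inv_mul_choose_mul_sqrt_le {m d s : ℕ} (hd : 1 ≤ d) (hs : 1 ≤ s) (hsm : s ≤ m) {K : ℝ}
    (hK : 0 ≤ K) :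
    ((m : ℝ) * (m - 1).choose (s - 1))⁻¹ * √(m.choose s * (K * (m - d).choose (s - 1))) ≤
      √(K / m) * (√(((m - d : ℕ) : ℝ) / ((m - 1 : ℕ) : ℝ)) ^ (s - 1) / √s) := by
  set ρ : ℝ := ((m - d : ℕ) : ℝ) / ((m - 1 : ℕ) : ℝ)
  set c : ℝ := ((m - 1).choose (s - 1) : ℝ) with hc_def
  have hc : 0 < c := Nat.cast_pos.mpr (Nat.choose_pos (by omega))
  have hmR : (0 : ℝ) < m := by exact_mod_cast (by omega : 0 < m)
  have hsR : (0 : ℝ) < s := by exact_mod_cast hs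
  have hchoose : (m.choose s : ℝ) = m * c / s := by
    have h := Nat.add_one_mul_choose_eq (m - 1) (s - 1)
    rw [Nat.sub_add_cancel (by omega : 1 ≤ m), Nat.sub_add_cancel hs] at h
    rw [eq_div_iff hsR.ne', hc_def]
    exact_mod_cast h.symm
  have hratio : ((m - d).choose (s - 1) : ℝ) ≤ c * ρ ^ (s - 1) :=
    Nat.cast_choose_le_cast_choose_mul_div_pow (by omega) (s - 1)
  rw [← pow_le_pow_iff_left₀ (by positivity) (by positivity) two_ne_zero, mul_pow, mul_pow,
    div_pow, sq_sqrt (by positivity), sq_sqrt (by positivity), sq_sqrt hsR.le, pow_right_comm,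
    sq_sqrt (by positivity), hchoose]
  calc ((m : ℝ) * c)⁻¹ ^ 2 * (m * c / s * (K * (m - d).choose (s - 1)))
      = K * (m - d).choose (s - 1) / (m * s * c) := by field_simp
    _ ≤ K * (c * ρ ^ (s - 1)) / (m * s * c) := by gcongr
    _ = K / m * (ρ ^ (s - 1) / s) := by field_simp

theorem exists_mul_eq_and_mul_sq_eq {P a b : ℝ} (hP : 0 < P) (ha : 0 < a) (hb : 0 < b) :
    ∃ α β : ℝ, 0 < α ∧ 0 < β ∧ α * β = P ∧
      a * α ^ 2 = P * √(a * b) ∧ b * β ^ 2 = P * √(a * b) := by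
  have hsa := sq_sqrt ha.le
  have hsb := sq_sqrt hb.le
  have : 0 < √a := sqrt_pos.mpr ha
  have : 0 < √b := sqrt_pos.mpr hb
  refine ⟨√(P * √b / √a), √(P * √a / √b), by positivity, by positivity, ?_, ?_, ?_⟩
  · rw [← sqrt_mul (by positivity), show P * √b / √a * (P * √a / √b) = P ^ 2 by field_simp,
      sqrt_sq hP.le]
  · rw [sq_sqrt (by positivity), sqrt_mul ha.le]
    field_simp
    rw [hsa]
  · rw [sq_sqrt (by positivity), sqrt_mul ha.le]
    field_simp
    rw [hsb]

theorem sum_weighted_geom_mean_le {m d : ℕ} (hd : 1 ≤ d) (hdm : d ≤ m) {K : ℝ} (hK : 0 ≤ K) :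
    ∑ s ∈ Icc 1 (m - d + 1),
        ((m : ℝ) * (m - 1).choose (s - 1))⁻¹ * √(m.choose s * (K * (m - d).choose (s - 1))) ≤
      7 * √(K / d) := by
  set q := √(((m - d : ℕ) : ℝ) / ((m - 1 : ℕ) : ℝ))
  have hq1 : q ≤ 1 :=
    sqrt_le_one.mpr <|
      div_le_one_of_le₀ (by exact_mod_cast (by omega : m - d ≤ m - 1)) (by positivity)
  have hmd : (1 : ℝ) ≤ m / d := by
    rw [one_le_div (by positivity)]
    exact_mod_cast hdm
  calc _ ≤ ∑ s ∈ Icc 1 (m - d + 1), √(K / m) * (q ^ (s - 1) / √s) := by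
        refine sum_le_sum fun s hs => ?_
        rw [mem_Icc] at hs
        exact inv_mul_choose_mul_sqrt_le hd hs.1 (by omega) hK
    _ = √(K / m) * ∑ s ∈ Icc 1 (m - d + 1), q ^ (s - 1) / √s := (mul_sum _ _ _).symm
    _ ≤ √(K / m) * (7 * √(m / d)) := by
        gcongr
        exact sum_Icc_pow_div_sqrt_le (sqrt_nonneg _) hq1 hmd (sum_Icc_sqrt_ratio_pow_le hd hdm)
    _ = 7 * √(K / d) := by
        have : (m : ℝ) ≠ 0 := by exact_mod_cast (by omega : m ≠ 0)
        rw [mul_left_comm, ← sqrt_mul (by positivity), div_mul_div_cancel₀ this]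

theorem exists_balanced_weights {m d : ℕ} (hd : 1 ≤ d) (hdm : d ≤ m) {K : ℝ} (hK : 0 < K) :
    ∃ α β : ℕ → ℝ,
      (∀ s, 1 ≤ s → s ≤ m - d + 1 →
        0 < α s ∧ 0 < β s ∧ α s * β s = ((m : ℝ) * (m - 1).choose (s - 1))⁻¹) ∧
      ∑ s ∈ Icc 1 (m - d + 1), (m.choose s : ℝ) * α s ^ 2 ≤ 7 * √(K / d) ∧
      ∑ s ∈ Icc 1 (m - d + 1), K * (m - d).choose (s - 1) * β s ^ 2 ≤ 7 * √(K / d) := by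
  have hbalance : ∀ s ∈ Icc 1 (m - d + 1), ∃ α β : ℝ, 0 < α ∧ 0 < β ∧
      α * β = ((m : ℝ) * (m - 1).choose (s - 1))⁻¹ ∧
      m.choose s * α ^ 2 = ((m : ℝ) * (m - 1).choose (s - 1))⁻¹ *
        √(m.choose s * (K * (m - d).choose (s - 1))) ∧
      K * (m - d).choose (s - 1) * β ^ 2 = ((m : ℝ) * (m - 1).choose (s - 1))⁻¹ *
        √(m.choose s * (K * (m - d).choose (s - 1))) := by
    intro s hs
    rw [mem_Icc] at hs
    have hm : (0 : ℝ) < m := by exact_mod_cast (by omega : 0 < m)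
    have h₁ : (0 : ℝ) < (m - 1).choose (s - 1) := Nat.cast_pos.mpr (Nat.choose_pos (by omega))
    have h₂ : (0 : ℝ) < m.choose s := Nat.cast_pos.mpr (Nat.choose_pos (by omega))
    have h₃ : (0 : ℝ) < (m - d).choose (s - 1) := Nat.cast_pos.mpr (Nat.choose_pos (by omega))
    exact exists_mul_eq_and_mul_sq_eq (by positivity) h₂ (by positivity)
  choose! α β hα hβ hαβ hαsq hβsq using hbalance
  have hsum := sum_weighted_geom_mean_le hd hdm hK.le
  refine ⟨α, β, fun s h₁ h₂ => ?_, ?_, ?_⟩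
  · have hs : s ∈ Icc 1 (m - d + 1) := mem_Icc.mpr ⟨h₁, h₂⟩
    exact ⟨hα s hs, hβ s hs, hαβ s hs⟩
  · rwa [sum_congr rfl hαsq]
  · rwa [sum_congr rfl hβsq]

theorem stmt4 : ∃ C : ℝ, 0 < C ∧ ∀ n k d : ℕ, 1 ≤ k → 1 ≤ d → k + d ≤ n →
    ∃ α β : ℕ → ℝ,
      (∀ s : ℕ, 1 ≤ s → s ≤ n - k - d + 1 →
        0 < α s ∧ 0 < β s ∧
        α s * β s = (((n:ℝ) - k) * (Nat.choose (n - k - 1) (s - 1) : ℝ))⁻¹) ∧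
      (∑ s ∈ Finset.Icc 1 (n - k - d + 1), (Nat.choose (n - k) s : ℝ) * (α s)^2
        ≤ C * Real.sqrt (((k:ℝ) + d) / d)) ∧
      (∑ s ∈ Finset.Icc 1 (n - k - d + 1),
          ((k:ℝ) + d) * (Nat.choose (n - k - d) (s - 1) : ℝ) * (β s)^2
        ≤ C * Real.sqrt (((k:ℝ) + d) / d)) := by
  refine ⟨7, by norm_num, fun n k d _ hd hkd => ?_⟩
  obtain ⟨m, rfl⟩ : ∃ m, n = m + k := ⟨n - k, by omega⟩
  have hm : ((m + k : ℕ) : ℝ) - k = m := by push_cast; ring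
  simpa only [Nat.add_sub_cancel, hm] using
    exists_balanced_weights hd (by omega : d ≤ m) (K := (k : ℝ) + d) (by positivity)
end

section
/- Let n, k, D, F, C be nonnegative integers with k ≥ 2, 2C ≤ k, F ≥ (4n·ln k)/k, and k − C ≤ n − D. Then C(n−D−F, k−C) / C(n−D, k−C) ≤ 1/k², where C(·,·) denotes the binomial coefficient (equal to 0 when the upper argument is negative or smaller than the lower one) and ln is the natural logarithm. -/
open Finset Real

theorem stmt5 (n k D F C : ℕ) (hk : 2 ≤ k) (hC : 2 * C ≤ k)
    (hF : 4 * (n:ℝ) * Real.log k / k ≤ (F:ℝ)) (hkn : k - C ≤ n - D) :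
    (Nat.choose (n - D - F) (k - C) : ℝ) / (Nat.choose (n - D) (k - C) : ℝ)
      ≤ 1 / (k:ℝ)^2 := by
  set m := n - D with hm
  set r := k - C with hr
  set a := m - F with ha
  have hk0 : (0:ℝ) < k := by positivity
  have hk2pos : (0:ℝ) < (k:ℝ)^2 := by positivity
  by_cases har : a < r
  · rw [Nat.choose_eq_zero_of_lt har]
    simp only [Nat.cast_zero, zero_div]
    positivity
  push_neg at har
  have hr1 : 1 ≤ r := by omega
  have hFm : F ≤ m := by omega
  have hmn : m ≤ n := by omega
  have hm1 : 1 ≤ m := by omega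
  have hn1 : 1 ≤ n := by omega
  have h2r : k ≤ 2 * r := by omega
  have hM0 : (0:ℝ) < (m:ℝ) := by exact_mod_cast hm1
  have hA : (a:ℝ) = (m:ℝ) - (F:ℝ) := by
    rw [ha]; push_cast [hFm]; ring
  have hA0 : (0:ℝ) ≤ (a:ℝ) := Nat.cast_nonneg a
  have hlogk : 0 ≤ Real.log k := Real.log_nonneg (by exact_mod_cast le_trans (by norm_num) hk)
  -- Step 1: nat inequality on descFactorials
  have hnat : a.descFactorial r * m ^ r ≤ m.descFactorial r * a ^ r := by
    have e1 : m ^ r = ∏ _i ∈ range r, m := by simp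
    have e2 : a ^ r = ∏ _i ∈ range r, a := by simp
    rw [Nat.descFactorial_eq_prod_range, Nat.descFactorial_eq_prod_range, e1, e2,
      ← Finset.prod_mul_distrib, ← Finset.prod_mul_distrib]
    apply Finset.prod_le_prod'
    intro i hi
    have hia : i ≤ a := le_trans (le_of_lt (Finset.mem_range.mp hi)) har
    have ham : a ≤ m := by omega
    have him : i ≤ m := le_trans hia ham
    zify [hia, him]
    have h1 : (i:ℤ) ≤ a := by exact_mod_cast hia
    have h2 : (a:ℤ) ≤ m := by exact_mod_cast ham
    have h3 : (0:ℤ) ≤ i := Int.ofNat_nonneg i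
    nlinarith
  -- Step 2: choose inequality in ℝ
  have hchoosem : (0:ℝ) < (m.choose r : ℝ) := by
    exact_mod_cast Nat.choose_pos hkn
  have hratio : (a.choose r : ℝ) / (m.choose r : ℝ) ≤ ((a:ℝ) / m) ^ r := by
    rw [div_pow, div_le_div_iff₀ hchoosem (pow_pos hM0 r)]
    have h1 : (a.descFactorial r : ℝ) * (m:ℝ) ^ r ≤ (m.descFactorial r : ℝ) * (a:ℝ) ^ r := by
      exact_mod_cast hnat
    rw [Nat.descFactorial_eq_factorial_mul_choose, Nat.descFactorial_eq_factorial_mul_choose] at h1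
    push_cast at h1
    have hfac : (0:ℝ) < (r.factorial : ℝ) := by exact_mod_cast r.factorial_pos
    nlinarith [hfac]
  -- Step 3: (a/m)^r ≤ exp(-(F*r/m))
  have hstep3 : ((a:ℝ) / m) ^ r ≤ Real.exp (-((F:ℝ) * r / m)) := by
    have h1 : (a:ℝ) / m ≤ Real.exp (-((F:ℝ)/m)) := by
      have := Real.add_one_le_exp (-((F:ℝ)/m))
      rw [hA, sub_div]
      have : (m:ℝ)/m = 1 := div_self (ne_of_gt hM0)
      rw [this]
      linarith [Real.add_one_le_exp (-((F:ℝ)/m))]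
    calc ((a:ℝ) / m) ^ r ≤ (Real.exp (-((F:ℝ)/m))) ^ r :=
          pow_le_pow_left₀ (by positivity) h1 r
      _ = Real.exp ((r:ℝ) * -((F:ℝ)/m)) := (Real.exp_nat_mul _ r).symm
      _ = Real.exp (-((F:ℝ) * r / m)) := by ring_nf
  -- Step 4: exponent bound
  have hexp : Real.exp (-((F:ℝ) * r / m)) ≤ 1 / (k:ℝ)^2 := by
    have hFr : 2 * (m:ℝ) * Real.log k ≤ (F:ℝ) * r := by
      have hrk : (k:ℝ) ≤ 2 * r := by exact_mod_cast h2r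
      have hFn : 4 * (n:ℝ) * Real.log k ≤ (F:ℝ) * k := by
        rw [div_le_iff₀ hk0] at hF; linarith
      have hmn' : (m:ℝ) ≤ n := by exact_mod_cast hmn
      nlinarith [(Nat.cast_nonneg F : (0:ℝ) ≤ F), hlogk]
    have h1 : 2 * Real.log k ≤ (F:ℝ) * r / m := by
      rw [le_div_iff₀ hM0]; linarith
    calc Real.exp (-((F:ℝ) * r / m)) ≤ Real.exp (-(2 * Real.log k)) :=
          Real.exp_le_exp.mpr (by linarith)
      _ = 1 / (k:ℝ)^2 := by
          rw [Real.exp_neg, show 2 * Real.log k = Real.log ((k:ℝ)^2) by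
            rw [Real.log_pow]; norm_num, Real.exp_log hk2pos, one_div]
  calc (a.choose r : ℝ) / (m.choose r : ℝ) ≤ ((a:ℝ)/m)^r := hratio
    _ ≤ Real.exp (-((F:ℝ) * r / m)) := hstep3
    _ ≤ 1 / (k:ℝ)^2 := hexp
end

section
/- Let 0 < p < 1 be real and k, d ≥ 1 be integers. Write b_K(ℓ) = C(K,ℓ)·p^ℓ·(1−p)^{K−ℓ} for the probability mass function of the binomial distribution B(K,p) (with b_K(ℓ) = 0 for ℓ < 0 or ℓ > K). Then the total variation distance equals the Kolmogorov distance: (1/2)·∑_{ℓ=0}^{k+d} |b_{k+d}(ℓ) − b_k(ℓ)| = max_{0 ≤ ℓ ≤ k+d+1} | ∑_{i ≥ ℓ} b_{k+d}(i) − ∑_{i ≥ ℓ} b_k(i) |. -/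
/-- The probability mass function of the binomial distribution `B(K, p)`:
`b_K(ℓ) = C(K,ℓ) p^ℓ (1-p)^{K-ℓ}` (it vanishes for `ℓ > K` since `C(K,ℓ) = 0`). -/
noncomputable def binomPMF (p : ℝ) (K ℓ : ℕ) : ℝ :=
  (Nat.choose K ℓ : ℝ) * p ^ ℓ * (1 - p) ^ (K - ℓ)

/-!
The difference `f = b_{k+d} - b_k` has total mass zero and changes sign exactly once, from
nonpositive to nonnegative: for `ℓ ≤ k` its sign is that of `C(k+d,ℓ) (1-p)^d - C(k,ℓ)`, and
once this is nonnegative it stays so, because `C(k,ℓ)/C(k+d,ℓ)` is nonincreasing in `ℓ`.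
For such an `f` the tail sums `∑_{i ≥ ℓ} f i` are nonnegative and maximal at the sign change `t`,
where both the positive part and the negative part of `f` have mass `∑_{i ≥ t} f i`.
-/

open Finset

section SignChange

variable {f : ℕ → ℝ} {N t : ℕ}

theorem sum_Icc_eq_neg_sum_range (hf : ∑ i ∈ range (N + 1), f i = 0) {ℓ : ℕ} (hℓ : ℓ ≤ N + 1) :
    ∑ i ∈ Icc ℓ N, f i = -∑ i ∈ range ℓ, f i := by
  rw [← Ico_add_one_right_eq_Icc, eq_neg_iff_add_eq_zero, add_comm, sum_range_add_sum_Ico f hℓ, hf]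

variable (hf : ∑ i ∈ range (N + 1), f i = 0) (hneg : ∀ i < t, f i ≤ 0)
  (hpos : ∀ i, t ≤ i → 0 ≤ f i)
include hf hneg hpos

theorem sum_Icc_nonneg_of_sign_change {ℓ : ℕ} (hℓ : ℓ ≤ N + 1) : 0 ≤ ∑ i ∈ Icc ℓ N, f i := by
  rcases le_or_gt t ℓ with htℓ | hℓt
  · exact sum_nonneg fun i hi => hpos i (htℓ.trans (mem_Icc.mp hi).1)
  · rw [sum_Icc_eq_neg_sum_range hf hℓ, neg_nonneg]
    exact sum_nonpos fun i hi => hneg i ((mem_range.mp hi).trans hℓt)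

theorem sum_Icc_le_of_sign_change (ht : t ≤ N + 1) {ℓ : ℕ} (hℓ : ℓ ≤ N + 1) :
    ∑ i ∈ Icc ℓ N, f i ≤ ∑ i ∈ Icc t N, f i := by
  rcases le_or_gt t ℓ with htℓ | hℓt
  · exact sum_le_sum_of_subset_of_nonneg (Icc_subset_Icc_left htℓ)
      fun i hi _ => hpos i (mem_Icc.mp hi).1
  · rw [sum_Icc_eq_neg_sum_range hf hℓ, sum_Icc_eq_neg_sum_range hf ht,
      ← sum_range_add_sum_Ico f hℓt.le, neg_add, le_add_iff_nonneg_right, neg_nonneg]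
    exact sum_nonpos fun i hi => hneg i (mem_Ico.mp hi).2

theorem sum_abs_eq_two_mul_sum_Icc_of_sign_change (ht : t ≤ N + 1) :
    ∑ i ∈ range (N + 1), |f i| = 2 * ∑ i ∈ Icc t N, f i := by
  have hbelow : ∑ i ∈ range t, |f i| = -∑ i ∈ range t, f i := by
    rw [← sum_neg_distrib]
    exact sum_congr rfl fun i hi => abs_of_nonpos (hneg i (mem_range.mp hi))
  have habove : ∑ i ∈ Icc t N, |f i| = ∑ i ∈ Icc t N, f i :=
    sum_congr rfl fun i hi => abs_of_nonneg (hpos i (mem_Icc.mp hi).1)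
  rw [← sum_range_add_sum_Ico _ ht, Ico_add_one_right_eq_Icc, hbelow, habove,
    ← sum_Icc_eq_neg_sum_range hf ht, two_mul]

theorem half_sum_abs_eq_sup'_abs_sum_Icc_of_sign_change (ht : t ≤ N + 1) :
    (1 / 2) * ∑ i ∈ range (N + 1), |f i|
      = (range (N + 2)).sup' nonempty_range_add_one (fun ℓ => |∑ i ∈ Icc ℓ N, f i|) := by
  rw [sum_abs_eq_two_mul_sum_Icc_of_sign_change hf hneg hpos ht, one_div,
    inv_mul_cancel_left₀ two_ne_zero]
  refine le_antisymm ?_ (sup'_le _ _ fun ℓ hℓ => ?_)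
  · exact le_sup'_of_le _ (mem_range.mpr (by omega)) (le_abs_self _)
  · have hℓ : ℓ ≤ N + 1 := Nat.lt_succ_iff.mp (mem_range.mp hℓ)
    rw [abs_of_nonneg (sum_Icc_nonneg_of_sign_change hf hneg hpos hℓ)]
    exact sum_Icc_le_of_sign_change hf hneg hpos ht hℓ

end SignChange

theorem binomPMF_eq_zero_of_lt {p : ℝ} {K ℓ : ℕ} (h : K < ℓ) : binomPMF p K ℓ = 0 := by
  simp [binomPMF, Nat.choose_eq_zero_of_lt h]

theorem binomPMF_nonneg {p : ℝ} (hp0 : 0 ≤ p) (hp1 : p ≤ 1) (K ℓ : ℕ) : 0 ≤ binomPMF p K ℓ := by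
  have : 0 ≤ 1 - p := sub_nonneg.mpr hp1
  unfold binomPMF
  positivity

theorem sum_binomPMF (p : ℝ) {K N : ℕ} (h : K ≤ N) :
    ∑ ℓ ∈ range (N + 1), binomPMF p K ℓ = 1 := by
  rw [← sum_range_add_sum_Ico _ (Nat.succ_le_succ h),
    sum_eq_zero fun ℓ hℓ => binomPMF_eq_zero_of_lt (mem_Ico.mp hℓ).1, add_zero]
  have hbinom := (add_pow p (1 - p) K).symm
  rw [add_sub_cancel, one_pow] at hbinom
  exact (sum_congr rfl fun ℓ _ => by rw [binomPMF]; ring).trans hbinom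

theorem binomPMF_add_sub_binomPMF (p : ℝ) {k ℓ : ℕ} (d : ℕ) (h : ℓ ≤ k) :
    binomPMF p (k + d) ℓ - binomPMF p k ℓ
      = p ^ ℓ * (1 - p) ^ (k - ℓ) * ((k + d).choose ℓ * (1 - p) ^ d - k.choose ℓ) := by
  rw [binomPMF, binomPMF, show k + d - ℓ = k - ℓ + d by omega, pow_add]
  ring

theorem choose_succ_le_choose_succ_mul {m n ℓ : ℕ} {c : ℝ} (hmn : m ≤ n) (hc : 0 ≤ c)
    (h : (m.choose ℓ : ℝ) ≤ n.choose ℓ * c) :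
    (m.choose (ℓ + 1) : ℝ) ≤ n.choose (ℓ + 1) * c := by
  have hm : (m.choose (ℓ + 1) : ℝ) * (ℓ + 1) = m.choose ℓ * (m - ℓ : ℕ) := by
    exact_mod_cast Nat.choose_succ_right_eq m ℓ
  have hn : (n.choose (ℓ + 1) : ℝ) * (ℓ + 1) = n.choose ℓ * (n - ℓ : ℕ) := by
    exact_mod_cast Nat.choose_succ_right_eq n ℓ
  have hsub : ((m - ℓ : ℕ) : ℝ) ≤ (n - ℓ : ℕ) := by exact_mod_cast Nat.sub_le_sub_right hmn ℓ
  refine le_of_mul_le_mul_right ?_ (by positivity : (0 : ℝ) < ℓ + 1)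
  calc (m.choose (ℓ + 1) : ℝ) * (ℓ + 1) = m.choose ℓ * (m - ℓ : ℕ) := hm
    _ ≤ n.choose ℓ * c * (n - ℓ : ℕ) := by gcongr
    _ = n.choose (ℓ + 1) * c * (ℓ + 1) := by rw [mul_right_comm, ← hn, mul_right_comm]

theorem exists_binomPMF_sub_sign_change {p : ℝ} (hp0 : 0 ≤ p) (hp1 : p ≤ 1) (k d : ℕ) :
    ∃ t ≤ k + 1, (∀ i < t, binomPMF p (k + d) i - binomPMF p k i ≤ 0) ∧
      ∀ i, t ≤ i → 0 ≤ binomPMF p (k + d) i - binomPMF p k i := by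
  classical
  have h1p : 0 ≤ 1 - p := sub_nonneg.mpr hp1
  let Q : ℕ → Prop := fun ℓ => (k.choose ℓ : ℝ) ≤ (k + d).choose ℓ * (1 - p) ^ d
  have hQ : Q (k + 1) := by simp only [Q, Nat.choose_succ_self, Nat.cast_zero]; positivity
  have hex : ∃ ℓ, Q ℓ := ⟨k + 1, hQ⟩
  have ht : Nat.find hex ≤ k + 1 := Nat.find_min' hex hQ
  have hQ_of_le : ∀ ℓ, Nat.find hex ≤ ℓ → Q ℓ := fun ℓ hℓ => by
    induction ℓ, hℓ using Nat.le_induction with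
    | base => exact Nat.find_spec hex
    | succ n _ ih =>
      exact choose_succ_le_choose_succ_mul (Nat.le_add_right k d) (by positivity) ih
  have hfactor_nonneg : ∀ i, 0 ≤ p ^ i * (1 - p) ^ (k - i) := fun i => by positivity
  refine ⟨Nat.find hex, ht, fun i hi => ?_, fun i hi => ?_⟩
  · have hik : i ≤ k := by omega
    rw [binomPMF_add_sub_binomPMF p d hik]
    exact mul_nonpos_of_nonneg_of_nonpos (hfactor_nonneg i)
      (sub_nonpos.mpr (not_le.mp (Nat.find_min hex hi)).le)
  · rcases le_or_gt i k with hik | hki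
    · rw [binomPMF_add_sub_binomPMF p d hik]
      exact mul_nonneg (hfactor_nonneg i) (sub_nonneg.mpr (hQ_of_le i hi))
    · rw [binomPMF_eq_zero_of_lt hki, sub_zero]
      exact binomPMF_nonneg hp0 hp1 _ _

theorem stmt6 (p : ℝ) (hp0 : 0 < p) (hp1 : p < 1) (k d : ℕ) :
    (1/2) * ∑ ℓ ∈ Finset.range (k + d + 1), |binomPMF p (k + d) ℓ - binomPMF p k ℓ|
      = (Finset.range (k + d + 2)).sup' (Finset.nonempty_range_iff.mpr (by omega))
          (fun ℓ => |(∑ i ∈ Finset.Icc ℓ (k + d), binomPMF p (k + d) i)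
            - ∑ i ∈ Finset.Icc ℓ (k + d), binomPMF p k i|) := by
  obtain ⟨t, ht, hneg, hpos⟩ := exists_binomPMF_sub_sign_change hp0.le hp1.le k d
  have hsum : ∑ i ∈ range (k + d + 1), (binomPMF p (k + d) i - binomPMF p k i) = 0 := by
    rw [sum_sub_distrib, sum_binomPMF p le_rfl, sum_binomPMF p (Nat.le_add_right k d), sub_self]
  simp_rw [← sum_sub_distrib]
  exact half_sum_abs_eq_sup'_abs_sum_Icc_of_sign_change hsum hneg hpos (by omega)
end

section
/- Let k ≥ 1 be an integer, n ≥ 200k, ε > 0 real, and let f : {0,1}^n → {−1,1} be such that its influences are non-increasing, Inf_1(f) ≥ Inf_2(f) ≥ ⋯ ≥ Inf_n(f), and ∑_{j=k+1}^{200k} Inf_j(f) ≥ ε/2. Then there exists an integer ℓ with 0 ≤ ℓ ≤ ⌊log₂(200k)⌋ such that |{ j ∈ [n] : Inf_j(f) ≥ ε/(2^{ℓ+3}·log₂(400k)) }| ≥ k + 2^ℓ. -/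
open scoped Classical

/-- The influence of coordinate `j` on `f`: `Inf_j(f) = ∑_{T ∋ j} f̂(T)²`. -/
noncomputable def influence {n : ℕ} (f : (Fin n → Bool) → ℝ) (j : Fin n) : ℝ :=
  ∑ T ∈ Finset.univ.filter (fun T : Finset (Fin n) => j ∈ T), (fourierCoef01 f T)^2

open Finset Function

lemma Finset.sum_Ico_le_sum_condensed_shift {M : Type*} [AddCommMonoid M] [PartialOrder M]
    [IsOrderedAddMonoid M] {u : ℕ → M} (hu : Antitone u) (a N : ℕ) :
    ∑ i ∈ Ico (a + 1) (a + 2 ^ N), u i ≤ ∑ ℓ ∈ range N, 2 ^ ℓ • u (a + 2 ^ ℓ) := by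
  convert le_sum_schlomilch' (u := fun ℓ => a + 2 ^ ℓ) (fun m _ _ hmn => hu hmn)
    (fun _ => by positivity) (fun _ _ h => Nat.add_le_add_left (Nat.pow_le_pow_right two_pos h) a)
    N using 2
  · simp
  · congr 1
    rw [pow_succ]
    omega

section ExtendByZero

variable {n : ℕ} {α : Type*}

lemma extend_val_zero_nonneg [Preorder α] [Zero α] {a : Fin n → α} (h0 : ∀ j, 0 ≤ a j)
    (i : ℕ) : 0 ≤ extend Fin.val a 0 i := by
  by_cases hin : i < n
  · rw [Fin.val_injective.extend_apply a 0 ⟨i, hin⟩]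
    exact h0 _
  · rw [extend_apply' _ _ i fun ⟨j, hj⟩ => hin (hj ▸ j.isLt)]
    exact le_rfl

lemma Antitone.extend_val_zero [Preorder α] [Zero α] {a : Fin n → α} (ha : Antitone a)
    (h0 : ∀ j, 0 ≤ a j) : Antitone (extend Fin.val a 0) := by
  intro m m' hmm'
  by_cases hm' : m' < n
  · rw [Fin.val_injective.extend_apply a 0 ⟨m', hm'⟩,
      Fin.val_injective.extend_apply a 0 ⟨m, hmm'.trans_lt hm'⟩]
    exact ha hmm'
  · rw [extend_apply' _ _ m' fun ⟨j, hj⟩ => hm' (hj ▸ j.isLt)]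
    exact extend_val_zero_nonneg h0 m

lemma Antitone.extend_val_zero_lt_of_card_filter_le [LinearOrder α] [Zero α] {a : Fin n → α}
    (ha : Antitone a) {t : α} (ht : 0 < t) {i : ℕ} (hi : #{j | t ≤ a j} ≤ i) :
    extend Fin.val a 0 i < t := by
  by_cases hin : i < n
  · rw [Fin.val_injective.extend_apply a 0 ⟨i, hin⟩]
    by_contra! hti
    have hIic : Iic ⟨i, hin⟩ ⊆ univ.filter fun j => t ≤ a j := fun j hj =>
      mem_filter.2 ⟨mem_univ j, hti.trans (ha (mem_Iic.1 hj))⟩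
    have := card_le_card hIic
    rw [Fin.card_Iic, Fin.val_mk] at this
    omega
  · rwa [extend_apply' _ _ i fun ⟨j, hj⟩ => hin (hj ▸ j.isLt)]

lemma Finset.sum_le_sum_extend_val {M : Type*} [AddCommMonoid M] [PartialOrder M]
    [IsOrderedAddMonoid M] {a : Fin n → M} (h0 : ∀ j, 0 ≤ a j) {s : Finset (Fin n)}
    {t : Finset ℕ} (hst : ∀ j ∈ s, (j : ℕ) ∈ t) :
    ∑ j ∈ s, a j ≤ ∑ i ∈ t, extend Fin.val a 0 i := by
  calc ∑ j ∈ s, a j = ∑ i ∈ s.map Fin.valEmbedding, extend Fin.val a 0 i := by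
        rw [sum_map]
        exact sum_congr rfl fun j _ => (Fin.val_injective.extend_apply a 0 j).symm
    _ ≤ ∑ i ∈ t, extend Fin.val a 0 i := by
        refine sum_le_sum_of_subset_of_nonneg (fun i hi => ?_) fun i _ _ =>
          extend_val_zero_nonneg h0 i
        obtain ⟨j, hj, rfl⟩ := mem_map.1 hi
        exact hst j hj

end ExtendByZero

lemma Antitone.sum_filter_le_sum_dyadic {n : ℕ} {a : Fin n → ℝ} (ha : Antitone a)
    (h0 : ∀ j, 0 ≤ a j) {k L m : ℕ} (hk : 1 ≤ k) (hm : m ≤ k - 1 + 2 ^ (L + 1))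
    {t : ℕ → ℝ} (ht : ∀ ℓ ≤ L, 0 < t ℓ) (hfew : ∀ ℓ ≤ L, #{j | t ℓ ≤ a j} < k + 2 ^ ℓ) :
    ∑ j ∈ univ.filter (fun j : Fin n => k ≤ (j : ℕ) ∧ (j : ℕ) < m), a j ≤
      ∑ ℓ ∈ range (L + 1), 2 ^ ℓ * t ℓ := by
  set u := extend Fin.val a 0
  have hu : Antitone u := ha.extend_val_zero h0
  have hblock : ∀ ℓ ∈ range (L + 1), 2 ^ ℓ • u (k - 1 + 2 ^ ℓ) ≤ 2 ^ ℓ * t ℓ := by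
    intro ℓ hℓ
    have hℓL := Nat.lt_succ_iff.1 (mem_range.1 hℓ)
    have hlt := ha.extend_val_zero_lt_of_card_filter_le (i := k - 1 + 2 ^ ℓ) (ht ℓ hℓL)
      (by have := hfew ℓ hℓL; omega)
    rw [nsmul_eq_mul]
    push_cast
    exact mul_le_mul_of_nonneg_left hlt.le (by positivity)
  calc _ ≤ ∑ i ∈ Ico k m, u i :=
        sum_le_sum_extend_val h0 fun j hj => by simpa using (mem_filter.1 hj).2
    _ ≤ ∑ i ∈ Ico (k - 1 + 1) (k - 1 + 2 ^ (L + 1)), u i := by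
        rw [Nat.sub_add_cancel hk]
        exact sum_le_sum_of_subset_of_nonneg (Ico_subset_Ico_right hm)
          fun i _ _ => extend_val_zero_nonneg h0 i
    _ ≤ ∑ ℓ ∈ range (L + 1), 2 ^ ℓ • u (k - 1 + 2 ^ ℓ) :=
        sum_Ico_le_sum_condensed_shift hu _ _
    _ ≤ ∑ ℓ ∈ range (L + 1), 2 ^ ℓ * t ℓ := sum_le_sum hblock

lemma influence_nonneg {n : ℕ} (f : (Fin n → Bool) → ℝ) (j : Fin n) : 0 ≤ influence f j :=
  sum_nonneg fun _ _ => sq_nonneg _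

lemma natLog_two_add_one_le_logb_two_mul {m : ℕ} (hm : m ≠ 0) :
    (Nat.log 2 m + 1 : ℝ) ≤ Real.logb 2 (2 * m) := by
  rw [Real.logb_mul two_ne_zero (by exact_mod_cast hm), Real.logb_self_eq_one one_lt_two,
    add_comm]
  exact add_le_add_right (by exact_mod_cast Real.natLog_le_logb m 2) 1

/- Coordinates are 0-indexed: `j : Fin n` with `(j : ℕ) = i` is the `(i+1)`-st variable,
so the sum of the `(k+1)`-st through `200k`-th influences is the sum over `k ≤ (j:ℕ) < 200k`. -/
theorem stmt8_general (n k : ℕ) (hk : 1 ≤ k) (ε : ℝ) (hε : 0 < ε)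
    (f : (Fin n → Bool) → ℝ)
    (hmono : ∀ i j : Fin n, i ≤ j → influence f j ≤ influence f i)
    (hsum : ε / 2 ≤ ∑ j ∈ Finset.univ.filter
        (fun j : Fin n => k ≤ (j:ℕ) ∧ (j:ℕ) < 200 * k), influence f j) :
    ∃ ℓ : ℕ, ℓ ≤ Nat.log 2 (200 * k) ∧
      (k + 2^ℓ : ℕ) ≤ (Finset.univ.filter (fun j : Fin n =>
        ε / ((2:ℝ)^(ℓ+3) * Real.logb 2 (400 * (k:ℝ))) ≤ influence f j)).card := by
  by_contra! hfew
  set L := Nat.log 2 (200 * k)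
  set lg := Real.logb 2 (400 * (k : ℝ))
  have hL : (L + 1 : ℝ) ≤ lg := by
    convert natLog_two_add_one_le_logb_two_mul (m := 200 * k) (by omega) using 2
    push_cast; ring
  have hlg : 0 < lg := by linarith
  have hcover : 200 * k ≤ k - 1 + 2 ^ (L + 1) := by
    have : 200 * k < 2 ^ (L + 1) := Nat.lt_pow_succ_log_self one_lt_two _
    omega
  have hdyadic := Antitone.sum_filter_le_sum_dyadic hmono (influence_nonneg f) hk hcover
    (t := fun ℓ => ε / (2 ^ (ℓ + 3) * lg)) (fun ℓ _ => by positivity) hfew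
  have hterm : ∀ ℓ : ℕ, (2 : ℝ) ^ ℓ * (ε / (2 ^ (ℓ + 3) * lg)) = ε / (8 * lg) := by
    intro ℓ; field_simp; ring
  simp only [hterm, sum_const, card_range, nsmul_eq_mul, Nat.cast_add, Nat.cast_one] at hdyadic
  have : (L + 1) * (ε / (8 * lg)) ≤ ε / 8 := by
    rw [mul_div_assoc', div_le_div_iff₀ (by positivity) (by positivity)]
    nlinarith
  linarith

theorem stmt8 (n k : ℕ) (hk : 1 ≤ k) (hn : 200 * k ≤ n) (ε : ℝ) (hε : 0 < ε)
    (f : (Fin n → Bool) → ℝ) (hf : ∀ x, f x = 1 ∨ f x = -1)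
    (hmono : ∀ i j : Fin n, i ≤ j → influence f j ≤ influence f i)
    (hsum : ε / 2 ≤ ∑ j ∈ Finset.univ.filter
        (fun j : Fin n => k ≤ (j:ℕ) ∧ (j:ℕ) < 200 * k), influence f j) :
    ∃ ℓ : ℕ, ℓ ≤ Nat.log 2 (200 * k) ∧
      (k + 2^ℓ : ℕ) ≤ (Finset.univ.filter (fun j : Fin n =>
        ε / ((2:ℝ)^(ℓ+3) * Real.logb 2 (400 * (k:ℝ))) ≤ influence f j)).card :=
  stmt8_general n k hk ε hε f hmono hsum
end

section
/- Let k ≥ 1 be an integer, ε > 0 real, and let w_1, …, w_n be nonnegative reals with w_j ≤ ε/(200k) for every j and ∑_{j=1}^n w_j ≥ ε/2. Then ∑_{V ⊆ [n]} (1/k)^{|V|}·(1 − 1/k)^{n−|V|} · [ ∑_{j∈V} w_j < ε/(4k) ] ≤ 1/25, where [·] denotes the indicator. In other words, if each j ∈ [n] is included in a random set V independently with probability 1/k, then Pr[ ∑_{j∈V} w_j < ε/(4k) ] ≤ 1/25. -/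
open scoped Classical

variable {ι : Type*} [DecidableEq ι]

lemma subset_step (p : ℝ) (f : Finset ι → ℝ) {a : ι} {s : Finset ι} (ha : a ∉ s) :
    ∑ V ∈ (insert a s).powerset,
        p ^ V.card * (1 - p) ^ ((insert a s).card - V.card) * f V
      = (1 - p) * ∑ V ∈ s.powerset, p ^ V.card * (1 - p) ^ (s.card - V.card) * f V
        + p * ∑ V ∈ s.powerset,
            p ^ V.card * (1 - p) ^ (s.card - V.card) * f (insert a V) := by
  rw [Finset.powerset_insert, Finset.sum_union, Finset.sum_image]
  · have h1 : ∀ V ∈ s.powerset,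
        p ^ V.card * (1 - p) ^ ((insert a s).card - V.card) * f V
          = (1 - p) * (p ^ V.card * (1 - p) ^ (s.card - V.card) * f V) := by
      intro V hV
      have : V.card ≤ s.card := Finset.card_le_card (Finset.mem_powerset.mp hV)
      rw [Finset.card_insert_of_notMem ha, Nat.succ_sub this, pow_succ]
      ring
    have h2 : ∀ V ∈ s.powerset,
        p ^ (insert a V).card * (1 - p) ^ ((insert a s).card - (insert a V).card)
            * f (insert a V)
          = p * (p ^ V.card * (1 - p) ^ (s.card - V.card) * f (insert a V)) := by
      intro V hV
      have haV : a ∉ V := fun h => ha (Finset.mem_powerset.mp hV h)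
      rw [Finset.card_insert_of_notMem ha, Finset.card_insert_of_notMem haV,
        Nat.succ_sub_succ, pow_succ]
      ring
    rw [Finset.sum_congr rfl h1, Finset.sum_congr rfl h2, ← Finset.mul_sum,
      ← Finset.mul_sum]
  · intro V hV V' hV' h
    have haV : a ∉ V := fun hm => ha (Finset.mem_powerset.mp hV hm)
    have haV' : a ∉ V' := fun hm => ha (Finset.mem_powerset.mp hV' hm)
    have := congrArg (Finset.erase · a) h
    simpa [Finset.erase_insert haV, Finset.erase_insert haV'] using this
  · rw [Finset.disjoint_left]
    intro V hV hV2
    obtain ⟨V', hV', rfl⟩ := Finset.mem_image.mp hV2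
    exact (fun hm => ha (Finset.mem_powerset.mp hV hm)) (Finset.mem_insert_self a V')

lemma mom0 (p : ℝ) (s : Finset ι) :
    ∑ V ∈ s.powerset, p ^ V.card * (1 - p) ^ (s.card - V.card) = 1 := by
  have := fun (a : ι) (s : Finset ι) => subset_step p (fun _ => (1:ℝ)) (a := a) (s := s)
  induction s using Finset.induction_on with
  | empty => simp
  | @insert a s ha ih =>
    have h := subset_step p (fun _ => (1:ℝ)) ha
    simp only [mul_one] at h
    rw [h, ih]; ring

lemma mom1 (p : ℝ) (w : ι → ℝ) (s : Finset ι) :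
    ∑ V ∈ s.powerset, p ^ V.card * (1 - p) ^ (s.card - V.card) * (∑ j ∈ V, w j)
      = p * ∑ j ∈ s, w j := by
  induction s using Finset.induction_on with
  | empty => simp
  | @insert a s ha ih =>
    have h := subset_step p (fun V => ∑ j ∈ V, w j) ha
    have h2 : ∀ V ∈ s.powerset,
        p ^ V.card * (1 - p) ^ (s.card - V.card) * (∑ j ∈ insert a V, w j)
          = p ^ V.card * (1 - p) ^ (s.card - V.card) * (∑ j ∈ V, w j)
            + p ^ V.card * (1 - p) ^ (s.card - V.card) * w a := by
      intro V hV
      have haV : a ∉ V := fun hm => ha (Finset.mem_powerset.mp hV hm)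
      rw [Finset.sum_insert haV]; ring
    rw [h, Finset.sum_congr rfl h2, Finset.sum_add_distrib, ← Finset.sum_mul, ih,
      mom0, Finset.sum_insert ha]
    ring

lemma mom2 (p : ℝ) (w : ι → ℝ) (s : Finset ι) :
    ∑ V ∈ s.powerset, p ^ V.card * (1 - p) ^ (s.card - V.card) * (∑ j ∈ V, w j) ^ 2
      = p * ∑ j ∈ s, (w j) ^ 2
        + p ^ 2 * ((∑ j ∈ s, w j) ^ 2 - ∑ j ∈ s, (w j) ^ 2) := by
  induction s using Finset.induction_on with
  | empty => simp
  | @insert a s ha ih =>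
    have h := subset_step p (fun V => (∑ j ∈ V, w j) ^ 2) ha
    have h2 : ∀ V ∈ s.powerset,
        p ^ V.card * (1 - p) ^ (s.card - V.card) * (∑ j ∈ insert a V, w j) ^ 2
          = p ^ V.card * (1 - p) ^ (s.card - V.card) * (∑ j ∈ V, w j) ^ 2
            + (2 * w a) * (p ^ V.card * (1 - p) ^ (s.card - V.card) * (∑ j ∈ V, w j))
            + (w a) ^ 2 * (p ^ V.card * (1 - p) ^ (s.card - V.card)) := by
      intro V hV
      have haV : a ∉ V := fun hm => ha (Finset.mem_powerset.mp hV hm)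
      rw [Finset.sum_insert haV]; ring
    rw [h, Finset.sum_congr rfl h2, Finset.sum_add_distrib, Finset.sum_add_distrib,
      ← Finset.mul_sum, ← Finset.mul_sum, ih, mom0, mom1,
      Finset.sum_insert ha, Finset.sum_insert ha]
    ring

theorem stmt9 (n k : ℕ) (hk : 1 ≤ k) (ε : ℝ) (hε : 0 < ε) (w : Fin n → ℝ)
    (hw0 : ∀ j, 0 ≤ w j) (hwub : ∀ j, w j ≤ ε / (200 * k))
    (hwsum : ε / 2 ≤ ∑ j, w j) :
    ∑ V : Finset (Fin n),
        (1 / (k:ℝ)) ^ V.card * (1 - 1 / (k:ℝ)) ^ (n - V.card) *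
          (if (∑ j ∈ V, w j) < ε / (4 * k) then (1:ℝ) else 0)
      ≤ 1 / 25 := by
  have hk' : (1:ℝ) ≤ (k:ℝ) := by exact_mod_cast hk
  have hk0 : (0:ℝ) < k := by linarith
  set p : ℝ := 1 / (k:ℝ) with hpdef
  have hp0 : 0 < p := by positivity
  have hp1 : p ≤ 1 := by rw [hpdef, div_le_one hk0]; exact hk'
  set S : ℝ := ∑ j, w j with hSdef
  have hS0 : 0 < S := lt_of_lt_of_le (by linarith) hwsum
  set μ : ℝ := p * S with hμdef
  have hμ0 : 0 < μ := mul_pos hp0 hS0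
  set Q2 : ℝ := ∑ j, (w j) ^ 2 with hQ2def
  have hQ20 : 0 ≤ Q2 := Finset.sum_nonneg fun j _ => sq_nonneg _
  have hthr : ε / (4 * k) ≤ μ / 2 := by
    have heq : ε / (4 * (k:ℝ)) = p * (ε / 2) / 2 := by
      rw [hpdef]; ring
    have h1 : p * (ε / 2) ≤ p * S := mul_le_mul_of_nonneg_left hwsum hp0.le
    rw [heq, hμdef]; linarith
  -- moment identities
  have e0 : ∑ V : Finset (Fin n), p ^ V.card * (1 - p) ^ (n - V.card) = 1 := by
    have := mom0 p (Finset.univ : Finset (Fin n))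
    simpa using this
  have e1 : ∑ V : Finset (Fin n),
      p ^ V.card * (1 - p) ^ (n - V.card) * (∑ j ∈ V, w j) = μ := by
    have := mom1 p w (Finset.univ : Finset (Fin n))
    simpa using this
  have e2 : ∑ V : Finset (Fin n),
      p ^ V.card * (1 - p) ^ (n - V.card) * (∑ j ∈ V, w j) ^ 2
      = p * Q2 + p ^ 2 * (S ^ 2 - Q2) := by
    have := mom2 p w (Finset.univ : Finset (Fin n))
    simpa using this
  -- pointwise Chebyshev bound
  have hpt : ∀ V : Finset (Fin n),
      p ^ V.card * (1 - p) ^ (n - V.card) *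
          (if (∑ j ∈ V, w j) < ε / (4 * k) then (1:ℝ) else 0)
        ≤ p ^ V.card * (1 - p) ^ (n - V.card) *
            (4 / μ ^ 2 * ((∑ j ∈ V, w j) - μ) ^ 2) := by
    intro V
    have hP : 0 ≤ p ^ V.card * (1 - p) ^ (n - V.card) :=
      mul_nonneg (pow_nonneg hp0.le _) (pow_nonneg (by linarith) _)
    apply mul_le_mul_of_nonneg_left _ hP
    by_cases hX : (∑ j ∈ V, w j) < ε / (4 * k)
    · simp only [if_pos hX]
      set X := ∑ j ∈ V, w j with hXdef
      have hXμ : X < μ / 2 := lt_of_lt_of_le hX hthr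
      have h2 : μ ^ 2 ≤ 4 * (X - μ) ^ 2 := by nlinarith
      have h3 : 4 / μ ^ 2 * (X - μ) ^ 2 = 4 * (X - μ) ^ 2 / μ ^ 2 := by ring
      rw [h3, le_div_iff₀ (by positivity)]; linarith
    · simp only [if_neg hX]; positivity
  calc ∑ V : Finset (Fin n),
        p ^ V.card * (1 - p) ^ (n - V.card) *
          (if (∑ j ∈ V, w j) < ε / (4 * k) then (1:ℝ) else 0)
      ≤ ∑ V : Finset (Fin n),
          p ^ V.card * (1 - p) ^ (n - V.card) *
            (4 / μ ^ 2 * ((∑ j ∈ V, w j) - μ) ^ 2) :=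
        Finset.sum_le_sum fun V _ => hpt V
    _ = 4 / μ ^ 2 * ∑ V : Finset (Fin n),
          (p ^ V.card * (1 - p) ^ (n - V.card) * (∑ j ∈ V, w j) ^ 2
            - 2 * μ * (p ^ V.card * (1 - p) ^ (n - V.card) * (∑ j ∈ V, w j))
            + μ ^ 2 * (p ^ V.card * (1 - p) ^ (n - V.card))) := by
        rw [Finset.mul_sum]; exact Finset.sum_congr rfl fun V _ => by ring
    _ = 4 / μ ^ 2 * (p * Q2 + p ^ 2 * (S ^ 2 - Q2) - 2 * μ * μ + μ ^ 2 * 1) := by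
        rw [Finset.sum_add_distrib, Finset.sum_sub_distrib, ← Finset.mul_sum,
          ← Finset.mul_sum, e0, e1, e2]
    _ = 4 * (p * (1 - p) * Q2) / μ ^ 2 := by rw [hμdef]; ring
    _ ≤ 1 / 25 := by
        rw [div_le_iff₀ (by positivity)]
        have hQ2ub : Q2 ≤ ε * p / 200 * S := by
          rw [hQ2def, hSdef, Finset.mul_sum]
          apply Finset.sum_le_sum
          intro j _
          have h1 : w j ≤ ε * p / 200 := by
            have := hwub j
            rw [hpdef]
            calc w j ≤ ε / (200 * k) := hwub j
              _ = ε * (1 / (k:ℝ)) / 200 := by ring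
          calc (w j) ^ 2 = w j * w j := by ring
            _ ≤ ε * p / 200 * w j := mul_le_mul_of_nonneg_right h1 (hw0 j)
        have hεS : ε ≤ 2 * S := by linarith
        nlinarith [mul_le_mul_of_nonneg_left hQ2ub (by positivity : (0:ℝ) ≤ 4 * p),
          mul_le_mul_of_nonneg_right hεS (by positivity : (0:ℝ) ≤ p ^ 2 * S / 50),
          mul_nonneg (mul_nonneg hp0.le hp0.le) hQ20,
          mul_nonneg (mul_nonneg hp0.le hp0.le) (mul_nonneg hQ20 hp0.le)]
end

section
/- Let n, t, ℓ be integers with t ≥ 0, 2t ≤ n and t ≤ ℓ ≤ n, and let a_1, …, a_t, b_1, …, b_t be pairwise distinct elements of [n]. Then ∑_{A ⊆ [n]} v_ℓ^n(t,a,b)(A)² = 2^t · C(n−2t, ℓ−t), where C(·,·) denotes the binomial coefficient. -/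
/-- The vector `v_ℓ^n(t,a,b)` on subsets of `[n]`: it vanishes on sets of size `≠ ℓ`, and on a
set `A` of size `ℓ` it equals `∏_{i=1}^t σ_i(A)`, where `σ_i(A) = 1` if `a_i ∈ A, b_i ∉ A`,
`σ_i(A) = -1` if `b_i ∈ A, a_i ∉ A`, and `σ_i(A) = 0` otherwise. -/
noncomputable def specV (n t : ℕ) (a b : Fin t → Fin n) (ℓ : ℕ) (A : Finset (Fin n)) : ℝ :=
  if A.card = ℓ then
    ∏ i : Fin t,
      (if a i ∈ A ∧ b i ∉ A then (1:ℝ) else if b i ∈ A ∧ a i ∉ A then (-1:ℝ) else 0)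
  else 0

/- `Function.Injective (Sum.elim a b)` says that `a_1, …, a_t, b_1, …, b_t` are pairwise
distinct elements of `[n]`. -/
theorem stmt10 (n t ℓ : ℕ) (h2t : 2 * t ≤ n) (hℓ1 : t ≤ ℓ) (hℓ2 : ℓ ≤ n)
    (a b : Fin t → Fin n) (hinj : Function.Injective (Sum.elim a b)) :
    ∑ A : Finset (Fin n), (specV n t a b ℓ A)^2
      = 2^t * (Nat.choose (n - 2*t) (ℓ - t) : ℝ) := by
  classical
  have ha : Function.Injective a := fun i j h => by
    have := hinj (show Sum.elim a b (.inl i) = Sum.elim a b (.inl j) from h)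
    simpa using this
  have hb : Function.Injective b := fun i j h => by
    have := hinj (show Sum.elim a b (.inr i) = Sum.elim a b (.inr j) from h)
    simpa using this
  have hab : ∀ i j, a i ≠ b j := fun i j h => by
    have := hinj (show Sum.elim a b (.inl i) = Sum.elim a b (.inr j) from h)
    simp at this
  -- the set of all a's and b's
  set D : Finset (Fin n) := Finset.univ.image (Sum.elim a b) with hD
  have haD : ∀ k, a k ∈ D := fun k =>
    Finset.mem_image.mpr ⟨Sum.inl k, Finset.mem_univ _, rfl⟩
  have hbD : ∀ k, b k ∈ D := fun k =>
    Finset.mem_image.mpr ⟨Sum.inr k, Finset.mem_univ _, rfl⟩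
  have hDcard : D.card = 2 * t := by
    rw [hD, Finset.card_image_of_injective _ hinj]
    simp [two_mul]
  have hDc : Dᶜ.card = n - 2 * t := by
    rw [Finset.card_compl, hDcard, Fintype.card_fin]
  -- step 1: rewrite summand as an indicator
  have hsum : ∑ A : Finset (Fin n), (specV n t a b ℓ A)^2
      = ∑ A : Finset (Fin n),
        (if A.card = ℓ ∧ ∀ i, ((a i ∈ A) ↔ (b i ∉ A)) then (1:ℝ) else 0) := by
    refine Finset.sum_congr rfl fun A _ => ?_
    unfold specV
    by_cases hc : A.card = ℓ
    · simp only [hc, if_true, true_and]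
      rw [← Finset.prod_pow]
      by_cases hA : ∀ i, ((a i ∈ A) ↔ (b i ∉ A))
      · rw [if_pos hA]
        apply Finset.prod_eq_one
        intro i _
        by_cases hai : a i ∈ A
        · have hbi : b i ∉ A := (hA i).mp hai
          rw [if_pos ⟨hai, hbi⟩]; norm_num
        · have hbi : b i ∈ A := by
            by_contra hbi; exact hai ((hA i).mpr hbi)
          rw [if_neg (by tauto), if_pos ⟨hbi, hai⟩]; norm_num
      · rw [if_neg hA]
        push_neg at hA
        obtain ⟨i, hi⟩ := hA
        apply Finset.prod_eq_zero (Finset.mem_univ i)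
        have h1 : ¬(a i ∈ A ∧ b i ∉ A) := by tauto
        have h2 : ¬(b i ∈ A ∧ a i ∉ A) := by tauto
        rw [if_neg h1, if_neg h2]; norm_num
    · simp [hc]
  rw [hsum, Finset.sum_boole]
  -- step 2: count the good sets via a bijection
  have hcard : (Finset.univ.filter
        (fun A : Finset (Fin n) => A.card = ℓ ∧ ∀ i, ((a i ∈ A) ↔ (b i ∉ A)))).card
      = ((Finset.univ : Finset (Fin t → Bool)) ×ˢ (Dᶜ.powersetCard (ℓ - t))).card := by
    -- helper facts about selectors
    have hselinj : ∀ g : Fin t → Bool,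
        Function.Injective (fun k => if g k then a k else b k) := by
      intro g i j h
      simp only at h
      by_cases hi' : g i <;> by_cases hj' : g j <;> simp [hi', hj'] at h
      · exact ha h
      · exact absurd h (hab i j)
      · exact absurd h.symm (hab j i)
      · exact hb h
    have himg_sub : ∀ g : Fin t → Bool,
        (Finset.univ.image (fun k => if g k then a k else b k)) ⊆ D := by
      intro g x hx
      obtain ⟨k, _, rfl⟩ := Finset.mem_image.mp hx
      by_cases hk : g k <;> simp [hk, haD, hbD]
    have himg_card : ∀ g : Fin t → Bool,
        (Finset.univ.image (fun k => if g k then a k else b k)).card = t := by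
      intro g
      rw [Finset.card_image_of_injective _ (hselinj g)]
      simp
    have ha_img : ∀ (g : Fin t → Bool) k,
        a k ∈ Finset.univ.image (fun m => if g m then a m else b m) ↔ g k = true := by
      intro g k
      constructor
      · intro hx
        obtain ⟨m, _, hm⟩ := Finset.mem_image.mp hx
        by_cases hgm : g m
        · simp only [hgm, if_true] at hm
          rwa [← ha hm]
        · simp only [hgm, if_false] at hm
          exact absurd hm.symm (hab k m)
      · intro hg
        exact Finset.mem_image.mpr ⟨k, Finset.mem_univ _, by simp [hg]⟩
    have hb_img : ∀ (g : Fin t → Bool) k,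
        b k ∈ Finset.univ.image (fun m => if g m then a m else b m) ↔ g k = false := by
      intro g k
      constructor
      · intro hx
        obtain ⟨m, _, hm⟩ := Finset.mem_image.mp hx
        by_cases hgm : g m
        · simp only [hgm, if_true] at hm
          exact absurd hm (hab m k)
        · simp only [hgm, if_false] at hm
          rw [← hb hm]
          simpa using hgm
      · intro hg
        exact Finset.mem_image.mpr ⟨k, Finset.mem_univ _, by simp [hg]⟩
    -- the key decomposition for good sets
    have hinter : ∀ A : Finset (Fin n), (∀ i, ((a i ∈ A) ↔ (b i ∉ A))) →
        A ∩ D = Finset.univ.image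
          (fun k => if (decide (a k ∈ A) : Bool) then a k else b k) := by
      intro A hA
      ext x
      constructor
      · intro hx
        obtain ⟨hxA, hxD⟩ := Finset.mem_inter.mp hx
        obtain ⟨s, _, rfl⟩ := Finset.mem_image.mp hxD
        cases s with
        | inl m =>
          refine Finset.mem_image.mpr ⟨m, Finset.mem_univ _, ?_⟩
          have : a m ∈ A := hxA
          simp [this]
        | inr m =>
          refine Finset.mem_image.mpr ⟨m, Finset.mem_univ _, ?_⟩
          have hbm : b m ∈ A := hxA
          have ham : a m ∉ A := fun h => (hA m).mp h hbm
          simp [ham]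
      · intro hx
        obtain ⟨k, _, rfl⟩ := Finset.mem_image.mp hx
        by_cases hk : a k ∈ A
        · simp only [hk, decide_eq_true_eq, if_pos]
          simpa [hk] using Finset.mem_inter.mpr ⟨hk, haD k⟩
        · have hbk : b k ∈ A := by
            by_contra hbk; exact hk ((hA k).mpr hbk)
          simpa [hk] using Finset.mem_inter.mpr ⟨hbk, hbD k⟩
    refine Finset.card_bij'
      (fun A _ => ((fun k => (decide (a k ∈ A) : Bool)), A \ D))
      (fun p _ => p.2 ∪ Finset.univ.image (fun k => if p.1 k then a k else b k))
      ?_ ?_ ?_ ?_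
    · -- forward map lands in target
      intro A hA
      rw [Finset.mem_filter] at hA
      obtain ⟨-, hcardA, hxor⟩ := hA
      rw [Finset.mem_product]
      refine ⟨Finset.mem_univ _, ?_⟩
      rw [Finset.mem_powersetCard]
      constructor
      · intro x hx
        rw [Finset.mem_compl]
        exact (Finset.mem_sdiff.mp hx).2
      · show (A \ D).card = ℓ - t
        have h1 : (A \ D).card + (A ∩ D).card = A.card :=
          Finset.card_sdiff_add_card_inter A D
        rw [hinter A hxor, himg_card, hcardA] at h1
        omega
    · -- backward map lands in source
      intro p hp
      rw [Finset.mem_product, Finset.mem_powersetCard] at hp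
      obtain ⟨-, hsub, hcardB⟩ := hp
      have hdisj : Disjoint p.2 (Finset.univ.image (fun k => if p.1 k then a k else b k)) := by
        refine Finset.disjoint_left.mpr fun x hx hx' => ?_
        have := himg_sub p.1 hx'
        exact (Finset.mem_compl.mp (hsub hx)) this
      have hnotB : ∀ x ∈ D, x ∉ p.2 := fun x hx hx' =>
        (Finset.mem_compl.mp (hsub hx')) hx
      rw [Finset.mem_filter]
      refine ⟨Finset.mem_univ _, ?_, ?_⟩
      · rw [Finset.card_union_of_disjoint hdisj, hcardB, himg_card]
        omega
      · intro i
        rw [Finset.mem_union, Finset.mem_union]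
        simp only [ha_img, hb_img]
        have h1 : a i ∉ p.2 := hnotB _ (haD i)
        have h2 : b i ∉ p.2 := hnotB _ (hbD i)
        cases hgi : p.1 i <;> simp [h1, h2, hgi]
    · -- left inverse
      intro A hA
      rw [Finset.mem_filter] at hA
      obtain ⟨-, hcardA, hxor⟩ := hA
      simp only
      rw [← hinter A hxor, Finset.sdiff_union_inter]
    · -- right inverse
      intro p hp
      rw [Finset.mem_product, Finset.mem_powersetCard] at hp
      obtain ⟨-, hsub, -⟩ := hp
      have hnotB : ∀ x ∈ D, x ∉ p.2 := fun x hx hx' =>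
        (Finset.mem_compl.mp (hsub hx')) hx
      have hmem : ∀ k, a k ∈ p.2 ∪ Finset.univ.image (fun m => if p.1 m then a m else b m)
          ↔ p.1 k = true := by
        intro k
        rw [Finset.mem_union, ha_img]
        have : a k ∉ p.2 := hnotB _ (haD k)
        tauto
      refine Prod.ext ?_ ?_
      · funext k
        show decide _ = p.1 k
        cases hpk : p.1 k <;> simp [hmem k, hpk]
      · simp only
        rw [Finset.union_sdiff_distrib]
        have h1 : p.2 \ D = p.2 := by
          apply Finset.sdiff_eq_self_of_disjoint
          exact Finset.disjoint_left.mpr fun x hx => fun hx' => (Finset.mem_compl.mp (hsub hx)) hx'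
        have h2 : (Finset.univ.image (fun m => if p.1 m then a m else b m)) \ D = ∅ := by
          rw [Finset.sdiff_eq_empty_iff_subset]
          exact himg_sub p.1
        rw [h1, h2, Finset.union_empty]
  rw [hcard, Finset.card_product, Finset.card_powersetCard, hDc]
  simp [Finset.card_univ]
end

section
/- Let n, t, ℓ be integers with t ≥ 0, n > 2t, and t + 1 ≤ ℓ ≤ n − 1 − t, and let a_1, …, a_t, b_1, …, b_t be pairwise distinct elements of [n−1]. Writing ṽ = v/‖v‖ for the Euclidean normalization, one has for every A ⊆ [n]: if n ∉ A then ṽ_ℓ^n(t,a,b)(A) = √((n−ℓ−t)/(n−2t)) · ṽ_ℓ^{n−1}(t,a,b)(A), and if n ∈ A then ṽ_ℓ^n(t,a,b)(A) = √((ℓ−t)/(n−2t)) · ṽ_{ℓ−1}^{n−1}(t,a,b)(A∖{n}), where on the right-hand sides A and A∖{n} are viewed as subsets of [n−1]. -/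
/-- The Euclidean normalization `ṽ = v/‖v‖` of `v_ℓ^n(t,a,b)`. -/
noncomputable def tildeV (n t : ℕ) (a b : Fin t → Fin n) (ℓ : ℕ) (A : Finset (Fin n)) : ℝ :=
  specV n t a b ℓ A / Real.sqrt (∑ B : Finset (Fin n), (specV n t a b ℓ B)^2)

/-!
On its support, the set of `ℓ`-sets meeting every pair `{a_i, b_i}` in exactly one point,
`v_ℓ^n(t,a,b)` takes the values `±1`. Such a set is a choice of one point from each pair
together with an `(ℓ-t)`-subset of the remaining `n-2t` points, so
`‖v_ℓ^n‖² = 2^t · C(n-2t, ℓ-t)`. Sets avoiding (containing) the point `n` carry the entries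
of `v_ℓ^{n-1}` (of `v_{ℓ-1}^{n-1}`), so the claim reduces to
`C(n-1-2t, ℓ-t) / C(n-2t, ℓ-t) = (n-ℓ-t)/(n-2t)` and
`C(n-1-2t, ℓ-1-t) / C(n-2t, ℓ-t) = (ℓ-t)/(n-2t)`.
-/

open Finset Function

section Transversal

variable {α ι : Type*} [DecidableEq α] [Fintype ι] {a b : ι → α}

def pairSet (a b : ι → α) : Finset α := univ.image (Sum.elim a b)

/-- The set `{a i | f i} ∪ {b i | ¬ f i}`. -/
def transversal (a b : ι → α) (f : ι → Bool) : Finset α :=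
  univ.image fun i => Sum.elim a b (bif f i then .inl i else .inr i)

lemma a_mem_pairSet (i : ι) : a i ∈ pairSet a b :=
  mem_image_of_mem (Sum.elim a b) (mem_univ (Sum.inl i : ι ⊕ ι))

lemma b_mem_pairSet (i : ι) : b i ∈ pairSet a b :=
  mem_image_of_mem (Sum.elim a b) (mem_univ (Sum.inr i : ι ⊕ ι))

lemma card_pairSet (hab : Injective (Sum.elim a b)) : #(pairSet a b) = 2 * Fintype.card ι := by
  rw [pairSet, card_image_of_injective _ hab, card_univ, Fintype.card_sum, two_mul]

lemma card_transversal (hab : Injective (Sum.elim a b)) (f : ι → Bool) :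
    #(transversal a b f) = Fintype.card ι := by
  refine (card_image_of_injective _ fun i j h => ?_).trans card_univ
  cases hi : f i <;> cases hj : f j <;> simpa [hi, hj] using hab h

lemma transversal_subset_pairSet (f : ι → Bool) : transversal a b f ⊆ pairSet a b := by
  intro x hx
  obtain ⟨i, -, rfl⟩ := mem_image.1 hx
  exact mem_image_of_mem _ (mem_univ _)

lemma a_mem_transversal_iff (hab : Injective (Sum.elim a b)) (f : ι → Bool) (j : ι) :
    a j ∈ transversal a b f ↔ f j = true := by
  rw [transversal, ← Sum.elim_inl a b j]
  simp only [mem_image, mem_univ, true_and, hab.eq_iff]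
  constructor
  · rintro ⟨i, hi⟩
    cases h : f i <;> simp_all
  · exact fun h => ⟨j, by simp [h]⟩

lemma b_mem_transversal_iff (hab : Injective (Sum.elim a b)) (f : ι → Bool) (j : ι) :
    b j ∈ transversal a b f ↔ f j = false := by
  rw [transversal, ← Sum.elim_inr a b j]
  simp only [mem_image, mem_univ, true_and, hab.eq_iff]
  constructor
  · rintro ⟨i, hi⟩
    cases h : f i <;> simp_all
  · exact fun h => ⟨j, by simp [h]⟩

lemma inter_pairSet_eq_transversal (hab : Injective (Sum.elim a b)) {B : Finset α}
    (hB : ∀ i, Xor (a i ∈ B) (b i ∈ B)) :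
    B ∩ pairSet a b = transversal a b (fun i => decide (a i ∈ B)) := by
  ext x
  by_cases hx : x ∈ pairSet a b
  · rw [mem_inter, and_iff_left hx]
    obtain ⟨i | i, -, rfl⟩ := mem_image.1 hx
    · simp [a_mem_transversal_iff hab]
    · simp only [Sum.elim_inr, b_mem_transversal_iff hab, decide_eq_false_iff_not]
      grind
  · simp only [mem_inter, hx, and_false, false_iff]
    exact fun h => hx (transversal_subset_pairSet _ h)

variable [Fintype α] [DecidableEq ι]

lemma card_filter_xor (hab : Injective (Sum.elim a b)) (k : ℕ) :
    #{B : Finset α | #B = k + Fintype.card ι ∧ ∀ i, Xor (a i ∈ B) (b i ∈ B)}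
      = 2 ^ Fintype.card ι * (Fintype.card α - 2 * Fintype.card ι).choose k := by
  set P := pairSet a b
  have hmem {f : ι → Bool} {C : Finset α} (hC : C ⊆ Pᶜ) {x : α} (hx : x ∈ P) :
      x ∈ transversal a b f ∪ C ↔ x ∈ transversal a b f := by
    rw [mem_union, or_iff_left fun h => mem_compl.1 (hC h) hx]
  have hdiff {f : ι → Bool} {C : Finset α} (hC : C ⊆ Pᶜ) : (transversal a b f ∪ C) \ P = C := by
    rw [union_sdiff_distrib, sdiff_eq_empty_iff_subset.2 (transversal_subset_pairSet f),
      (subset_compl_iff_disjoint_right.1 hC).sdiff_eq_left, empty_union]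
  have key := card_nbij' (s := (univ : Finset (ι → Bool)) ×ˢ Pᶜ.powersetCard k)
    (t := {B : Finset α | #B = k + Fintype.card ι ∧ ∀ i, Xor (a i ∈ B) (b i ∈ B)})
    (fun p => transversal a b p.1 ∪ p.2) (fun B => (fun i => decide (a i ∈ B), B \ P))
    ?_ ?_ ?_ ?_
  · rw [← key, card_product, card_powersetCard, card_compl, card_pairSet hab, card_univ,
      Fintype.card_fun, Fintype.card_bool]
  · rintro ⟨f, C⟩ hfC
    obtain ⟨-, hCP, hCk⟩ := by simpa only [mem_coe, mem_product, mem_powersetCard] using hfC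
    simp only [mem_coe, mem_filter, mem_univ, true_and]
    refine ⟨?_, fun i => ?_⟩
    · rw [card_union_of_disjoint ((subset_compl_iff_disjoint_left.1 hCP).mono_left
        (transversal_subset_pairSet f)), card_transversal hab, hCk, add_comm]
    · rw [hmem hCP (a_mem_pairSet i), hmem hCP (b_mem_pairSet i), a_mem_transversal_iff hab,
        b_mem_transversal_iff hab]
      cases f i <;> simp [xor_def]
  · intro B hB
    obtain ⟨hBk, hB⟩ := by simpa only [mem_coe, mem_filter, mem_univ, true_and] using hB
    simp only [mem_coe, mem_product, mem_univ, true_and, mem_powersetCard]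
    refine ⟨fun x hx => mem_compl.2 (mem_sdiff.1 hx).2, ?_⟩
    have := card_sdiff_add_card_inter B P
    rw [inter_pairSet_eq_transversal hab hB, card_transversal hab] at this
    omega
  · rintro ⟨f, C⟩ hfC
    obtain ⟨-, hCP, -⟩ := by simpa only [mem_coe, mem_product, mem_powersetCard] using hfC
    refine Prod.ext (funext fun i => ?_) (hdiff hCP)
    simp only [hmem hCP (a_mem_pairSet i), a_mem_transversal_iff hab, Bool.decide_eq_true]
  · intro B hB
    obtain ⟨-, hB⟩ := by simpa only [mem_coe, mem_filter, mem_univ, true_and] using hB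
    change transversal a b _ ∪ B \ P = B
    rw [← inter_pairSet_eq_transversal hab hB, union_comm, sdiff_union_inter]

end Transversal

lemma specV_sq {n t : ℕ} (a b : Fin t → Fin n) (ℓ : ℕ) (B : Finset (Fin n)) :
    specV n t a b ℓ B ^ 2 = if #B = ℓ ∧ ∀ i, Xor (a i ∈ B) (b i ∈ B) then 1 else 0 := by
  have hfactor (p q : Prop) [Decidable p] [Decidable q] :
      (if p ∧ ¬q then (1 : ℝ) else if q ∧ ¬p then -1 else 0) ^ 2 = if Xor p q then 1 else 0 := by
    by_cases p <;> by_cases q <;> simp_all [xor_def]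
  unfold specV
  by_cases hB : #B = ℓ
  · simp only [hB, if_true, true_and, ← prod_pow, hfactor, Fintype.prod_boole]
    congr
  · simp [hB]

lemma sum_specV_sq {n t : ℕ} {a b : Fin t → Fin n} (hab : Injective (Sum.elim a b)) (k : ℕ) :
    ∑ B, specV n t a b (k + t) B ^ 2 = 2 ^ t * ((n - 2 * t).choose k : ℝ) := by
  simp_rw [specV_sq, sum_boole]
  simpa using congrArg (Nat.cast (R := ℝ)) (card_filter_xor hab k)

lemma card_filter_castSucc_mem {n : ℕ} (A : Finset (Fin (n + 1))) :
    #{i : Fin n | i.castSucc ∈ A} = #(A.erase (Fin.last n)) := by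
  rw [← card_map Fin.castSuccEmb]
  congr 1
  ext x
  simp only [mem_map, mem_filter, mem_univ, true_and, Fin.coe_castSuccEmb, mem_erase]
  constructor
  · rintro ⟨y, hy, rfl⟩
    exact ⟨Fin.castSucc_ne_last y, hy⟩
  · rintro ⟨hx, hxA⟩
    exact ⟨x.castPred hx, by simpa using hxA, Fin.castSucc_castPred x hx⟩

section Restriction

variable {n t : ℕ} (a b : Fin t → Fin n) {A : Finset (Fin (n + 1))}

lemma specV_castSucc_of_last_notMem (ℓ : ℕ) (hA : Fin.last n ∉ A) :
    specV (n + 1) t (fun i => (a i).castSucc) (fun i => (b i).castSucc) ℓ A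
      = specV n t a b ℓ {i : Fin n | i.castSucc ∈ A} := by
  simp only [specV, card_filter_castSucc_mem, erase_eq_of_notMem hA, mem_filter, mem_univ,
    true_and]

lemma specV_castSucc_of_last_mem (ℓ : ℕ) (hA : Fin.last n ∈ A) :
    specV (n + 1) t (fun i => (a i).castSucc) (fun i => (b i).castSucc) (ℓ + 1) A
      = specV n t a b ℓ {i : Fin n | i.castSucc ∈ A} := by
  have hA₁ : 1 ≤ #A := card_pos.2 ⟨_, hA⟩
  simp only [specV, card_filter_castSucc_mem, card_erase_of_mem hA, Nat.sub_eq_iff_eq_add hA₁,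
    mem_filter, mem_univ, true_and]

end Restriction

lemma Nat.choose_succ_div_succ_choose_succ {m k : ℕ} (hk : k ≤ m) :
    (m.choose (k + 1) : ℝ) / (m + 1).choose (k + 1) = (m - k) / (m + 1) := by
  have hpos : (0 : ℝ) < (m + 1).choose (k + 1) := by exact_mod_cast Nat.choose_pos (by omega)
  rw [div_eq_div_iff hpos.ne' (by positivity), ← Nat.cast_sub hk]
  have h := Nat.choose_mul_succ_eq m (k + 1)
  rw [Nat.add_sub_add_right] at h
  rw [mul_comm ((m - k : ℕ) : ℝ)]
  exact_mod_cast h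

lemma Nat.choose_div_succ_choose_succ {m k : ℕ} (hk : k ≤ m) :
    (m.choose k : ℝ) / (m + 1).choose (k + 1) = (k + 1) / (m + 1) := by
  have hpos : (0 : ℝ) < (m + 1).choose (k + 1) := by exact_mod_cast Nat.choose_pos (by omega)
  rw [div_eq_div_iff hpos.ne' (by positivity), mul_comm, mul_comm ((k : ℝ) + 1)]
  exact_mod_cast Nat.add_one_mul_choose_eq m k

lemma div_sqrt_eq_sqrt_div_mul_div_sqrt (x : ℝ) {S : ℝ} (hS : 0 < S) (S' : ℝ) :
    x / √S' = √(S / S') * (x / √S) := by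
  rw [Real.sqrt_div hS.le]
  have := (Real.sqrt_pos.2 hS).ne'
  field_simp

/- The paper's `n` is `n + 1` here: `[n]` is `Fin (n + 1)` with the point `n` as
`Fin.last n`, and `A ∖ {n}`, viewed in `[n-1] = Fin n`, is `{i : Fin n | i.castSucc ∈ A}`. -/
theorem stmt11_general (n t ℓ : ℕ) (hℓ1 : t + 1 ≤ ℓ) (hℓ2 : ℓ ≤ n - t)
    (a b : Fin t → Fin n) (hinj : Function.Injective (Sum.elim a b))
    (A : Finset (Fin (n + 1))) :
    (Fin.last n ∉ A →
      tildeV (n+1) t (fun i => (a i).castSucc) (fun i => (b i).castSucc) ℓ A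
        = Real.sqrt (((n:ℝ) + 1 - ℓ - t) / ((n:ℝ) + 1 - 2*t))
            * tildeV n t a b ℓ (Finset.univ.filter (fun i : Fin n => i.castSucc ∈ A))) ∧
    (Fin.last n ∈ A →
      tildeV (n+1) t (fun i => (a i).castSucc) (fun i => (b i).castSucc) ℓ A
        = Real.sqrt (((ℓ:ℝ) - t) / ((n:ℝ) + 1 - 2*t))
            * tildeV n t a b (ℓ - 1)
                (Finset.univ.filter (fun i : Fin n => i.castSucc ∈ A))) := by
  obtain ⟨k, rfl⟩ : ∃ k, ℓ = k + t + 1 := ⟨ℓ - t - 1, by omega⟩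
  obtain ⟨m, rfl⟩ : ∃ m, n = m + 2 * t := ⟨n - 2 * t, by omega⟩
  have hinj' : Injective (Sum.elim (fun i => (a i).castSucc) (fun i => (b i).castSucc)) :=
    Sum.comp_elim Fin.castSucc a b ▸ (Fin.castSucc_injective _).comp hinj
  have hbig : ∑ B, specV (m + 2 * t + 1) t (fun i => (a i).castSucc) (fun i => (b i).castSucc)
      (k + t + 1) B ^ 2 = 2 ^ t * ((m + 1).choose (k + 1) : ℝ) := by
    rw [Nat.add_right_comm k, sum_specV_sq hinj', show m + 2 * t + 1 - 2 * t = m + 1 by omega]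
  have hsmall (j : ℕ) : ∑ B, specV (m + 2 * t) t a b (j + t) B ^ 2 = 2 ^ t * (m.choose j : ℝ) := by
    rw [sum_specV_sq hinj, Nat.add_sub_cancel]
  have hpos (j : ℕ) (hj : j ≤ m) : (0 : ℝ) < 2 ^ t * m.choose j := by
    have := Nat.choose_pos hj
    positivity
  simp only [tildeV, hbig]
  refine ⟨fun hA => ?_, fun hA => ?_⟩
  · rw [specV_castSucc_of_last_notMem a b _ hA, Nat.add_right_comm k t 1, hsmall,
      div_sqrt_eq_sqrt_div_mul_div_sqrt _ (hpos (k + 1) (by omega)),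
      mul_div_mul_left _ _ (by positivity),
      Nat.choose_succ_div_succ_choose_succ (by omega)]
    push_cast
    ring_nf
  · rw [specV_castSucc_of_last_mem a b _ hA, Nat.add_sub_cancel, hsmall,
      div_sqrt_eq_sqrt_div_mul_div_sqrt _ (hpos k (by omega)), mul_div_mul_left _ _ (by positivity),
      Nat.choose_div_succ_choose_succ (by omega)]
    push_cast
    ring_nf

theorem stmt11 (n t ℓ : ℕ) (hn : 2 * t < n + 1) (hℓ1 : t + 1 ≤ ℓ) (hℓ2 : ℓ ≤ n - t)
    (a b : Fin t → Fin n) (hinj : Function.Injective (Sum.elim a b))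
    (A : Finset (Fin (n + 1))) :
    (Fin.last n ∉ A →
      tildeV (n+1) t (fun i => (a i).castSucc) (fun i => (b i).castSucc) ℓ A
        = Real.sqrt (((n:ℝ) + 1 - ℓ - t) / ((n:ℝ) + 1 - 2*t))
            * tildeV n t a b ℓ (Finset.univ.filter (fun i : Fin n => i.castSucc ∈ A))) ∧
    (Fin.last n ∈ A →
      tildeV (n+1) t (fun i => (a i).castSucc) (fun i => (b i).castSucc) ℓ A
        = Real.sqrt (((ℓ:ℝ) - t) / ((n:ℝ) + 1 - 2*t))
            * tildeV n t a b (ℓ - 1)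
                (Finset.univ.filter (fun i : Fin n => i.castSucc ∈ A))) :=
  stmt11_general n t ℓ hℓ1 hℓ2 a b hinj A
end

section
/- Let n, k, t be integers with 0 ≤ t ≤ min(k, n−k), let α_0, …, α_{n−k} be real numbers, and let a_1, …, a_t, b_1, …, b_t be pairwise distinct elements of [n]. For each T ⊆ [n] with |T| = n−k define ψ_T : {A : A ⊆ [n]} → ℝ by ψ_T(A) = α_{|A|} if A ⊆ T and ψ_T(A) = 0 otherwise. Then, as functions on subsets of [n], ∑_{T ⊆ [n], |T| = n−k} v_{n−k}^n(t,a,b)(T) · ψ_T = ∑_{ℓ=t}^{n−k} α_ℓ · C(n−ℓ−t, k−t) · v_ℓ^n(t,a,b), where C(·,·) denotes the binomial coefficient. -/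
open scoped Classical
open Finset

lemma inj_facts {n t : ℕ} {a b : Fin t → Fin n} (hinj : Function.Injective (Sum.elim a b)) :
    (∀ i j, a i = a j → i = j) ∧ (∀ i j, b i = b j → i = j) ∧ (∀ i j, a i ≠ b j) := by
  refine ⟨fun i j h => ?_, fun i j h => ?_, fun i j h => ?_⟩
  · have := hinj (a₁ := Sum.inl i) (a₂ := Sum.inl j) (by simpa using h)
    simpa using this
  · have := hinj (a₁ := Sum.inr i) (a₂ := Sum.inr j) (by simpa using h)
    simpa using this
  · have := hinj (a₁ := Sum.inl i) (a₂ := Sum.inr j) (by simpa using h)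
    simp at this

noncomputable def sg {n t : ℕ} (a b : Fin t → Fin n) (i : Fin t) (S : Finset (Fin n)) : ℝ :=
  if a i ∈ S ∧ b i ∉ S then 1 else if b i ∈ S ∧ a i ∉ S then -1 else 0

lemma specV_eq {n t : ℕ} (a b : Fin t → Fin n) (ℓ : ℕ) (A : Finset (Fin n)) :
    specV n t a b ℓ A = if A.card = ℓ then ∏ i, sg a b i A else 0 := rfl

noncomputable def swapT {n : ℕ} (u v : Fin n) (T : Finset (Fin n)) : Finset (Fin n) :=
  if u ∈ T ∧ v ∉ T then insert v (T.erase u)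
  else if v ∈ T ∧ u ∉ T then insert u (T.erase v) else T

lemma swapT_mem {n : ℕ} (u v : Fin n) (hne : u ≠ v) (T : Finset (Fin n)) (x : Fin n) :
    x ∈ swapT u v T ↔ (if x = u then v ∈ T else if x = v then u ∈ T else x ∈ T) := by
  unfold swapT
  by_cases h1 : u ∈ T <;> by_cases h2 : v ∈ T
  · rw [if_neg (by simp [h2]), if_neg (by simp [h1])]
    split_ifs with hx1 hx2
    · subst hx1; simp [h1, h2]
    · subst hx2; simp [h1, h2]
    · exact Iff.rfl
  · rw [if_pos ⟨h1, h2⟩, Finset.mem_insert, Finset.mem_erase]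
    split_ifs with hx1 hx2
    · subst hx1; simp [hne, h2]
    · subst hx2; simp [h1]
    · simp [hx1, hx2]
  · rw [if_neg (by simp [h2]), if_pos ⟨h2, h1⟩, Finset.mem_insert, Finset.mem_erase]
    split_ifs with hx1 hx2
    · subst hx1; simp [h2]
    · subst hx2; simp [Ne.symm hne, h1]
    · simp [hx1, hx2]
  · rw [if_neg (by simp [h1]), if_neg (by simp [h2])]
    split_ifs with hx1 hx2
    · subst hx1; simp [h1, h2]
    · subst hx2; simp [h1, h2]
    · exact Iff.rfl

lemma swapT_swapT {n : ℕ} (u v : Fin n) (hne : u ≠ v) (T : Finset (Fin n)) :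
    swapT u v (swapT u v T) = T := by
  ext x
  rw [swapT_mem u v hne, swapT_mem u v hne, swapT_mem u v hne, swapT_mem u v hne]
  simp only [if_neg (Ne.symm hne), if_pos rfl]
  split_ifs <;> simp_all

lemma swapT_card {n : ℕ} (u v : Fin n) (T : Finset (Fin n)) :
    (swapT u v T).card = T.card := by
  unfold swapT
  by_cases h1 : u ∈ T <;> by_cases h2 : v ∈ T
  · rw [if_neg (by simp [h2]), if_neg (by simp [h1])]
  · rw [if_pos ⟨h1, h2⟩, Finset.card_insert_of_notMem (by simp [h2]),
      Finset.card_erase_of_mem h1]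
    have : 1 ≤ T.card := Finset.card_pos.mpr ⟨_, h1⟩
    omega
  · rw [if_neg (by simp [h2]), if_pos ⟨h2, h1⟩,
      Finset.card_insert_of_notMem (by simp [h1]), Finset.card_erase_of_mem h2]
    have : 1 ≤ T.card := Finset.card_pos.mpr ⟨_, h2⟩
    omega
  · rw [if_neg (by simp [h1]), if_neg (by simp [h2])]

lemma swapT_eq_self {n : ℕ} (u v : Fin n) (T : Finset (Fin n))
    (h : ¬((u ∈ T ∧ v ∉ T) ∨ (v ∈ T ∧ u ∉ T))) : swapT u v T = T := by
  rw [not_or] at h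
  unfold swapT
  rw [if_neg h.1, if_neg h.2]

lemma sum_cancel {n t : ℕ} (a b : Fin t → Fin n)
    (ha : ∀ i j, a i = a j → i = j) (hb : ∀ i j, b i = b j → i = j)
    (hab : ∀ i j, a i ≠ b j)
    (A : Finset (Fin n)) (m : ℕ) (i0 : Fin t) (ha0 : a i0 ∉ A) (hb0 : b i0 ∉ A) :
    ∑ T ∈ univ.filter (fun T : Finset (Fin n) => T.card = m ∧ A ⊆ T),
      ∏ i, sg a b i T = 0 := by
  have hne : a i0 ≠ b i0 := hab i0 i0
  set g : Finset (Fin n) → Finset (Fin n) := swapT (a i0) (b i0) with hg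
  have hmem : ∀ (T : Finset (Fin n)) (x : Fin n), x ∈ g T ↔
      (if x = a i0 then b i0 ∈ T else if x = b i0 then a i0 ∈ T else x ∈ T) :=
    fun T x => swapT_mem _ _ hne T x
  have hsub : ∀ T, A ⊆ T → A ⊆ g T := by
    intro T hT x hx
    have hxa : x ≠ a i0 := fun h => ha0 (h ▸ hx)
    have hxb : x ≠ b i0 := fun h => hb0 (h ▸ hx)
    rw [hmem, if_neg hxa, if_neg hxb]
    exact hT hx
  have hsg_other : ∀ T (i : Fin t), i ≠ i0 → sg a b i (g T) = sg a b i T := by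
    intro T i hi
    have h1 : a i ≠ a i0 := fun h => hi (ha _ _ h)
    have h2 : a i ≠ b i0 := hab i i0
    have h3 : b i ≠ a i0 := fun h => (hab i0 i h.symm).elim
    have h4 : b i ≠ b i0 := fun h => hi (hb _ _ h)
    have e1 : (a i ∈ g T) ↔ (a i ∈ T) := by rw [hmem, if_neg h1, if_neg h2]
    have e2 : (b i ∈ g T) ↔ (b i ∈ T) := by rw [hmem, if_neg h3, if_neg h4]
    unfold sg
    simp only [e1, e2]
  have hflip : ∀ T, ((a i0 ∈ T ∧ b i0 ∉ T) ∨ (b i0 ∈ T ∧ a i0 ∉ T)) →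
      (∏ i, sg a b i (g T)) = -∏ i, sg a b i T := by
    intro T hT
    rw [← Finset.mul_prod_erase univ _ (mem_univ i0),
        ← Finset.mul_prod_erase univ (fun i => sg a b i T) (mem_univ i0)]
    have hrest : ∏ i ∈ univ.erase i0, sg a b i (g T) = ∏ i ∈ univ.erase i0, sg a b i T :=
      Finset.prod_congr rfl fun i hi => hsg_other T i (Finset.mem_erase.mp hi).1
    rw [hrest, neg_mul_eq_neg_mul]
    congr 1
    have hga : a i0 ∈ g T ↔ b i0 ∈ T := by rw [hmem, if_pos rfl]
    have hgb : b i0 ∈ g T ↔ a i0 ∈ T := by rw [hmem, if_neg (Ne.symm hne), if_pos rfl]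
    rcases hT with ⟨h1, h2⟩ | ⟨h1, h2⟩ <;> unfold sg <;>
      simp [hga, hgb, h1, h2]
  apply Finset.sum_involution (fun T _ => g T)
  · intro T hT
    by_cases hc : (a i0 ∈ T ∧ b i0 ∉ T) ∨ (b i0 ∈ T ∧ a i0 ∉ T)
    · rw [hflip T hc]; ring
    · have hgT : g T = T := swapT_eq_self _ _ _ hc
      have h0 : sg a b i0 T = 0 := by
        rw [not_or] at hc
        unfold sg
        rw [if_neg hc.1, if_neg hc.2]
      rw [hgT, Finset.prod_eq_zero (mem_univ i0) h0]
      ring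
  · intro T hT hfne hcontra
    have hsgi0 : sg a b i0 T ≠ 0 := by
      intro h0
      exact hfne (Finset.prod_eq_zero (mem_univ i0) h0)
    have hc : (a i0 ∈ T ∧ b i0 ∉ T) ∨ (b i0 ∈ T ∧ a i0 ∉ T) := by
      by_contra hc
      apply hsgi0
      rw [not_or] at hc
      unfold sg
      rw [if_neg hc.1, if_neg hc.2]
    rcases hc with ⟨h1, h2⟩ | ⟨h1, h2⟩
    · have : a i0 ∈ g T := by rw [hcontra]; exact h1
      rw [hmem, if_pos rfl] at this
      exact h2 this
    · have : b i0 ∈ g T := by rw [hcontra]; exact h1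
      rw [hmem, if_neg (Ne.symm hne), if_pos rfl] at this
      exact h2 this
  · intro T hT
    simp only [mem_filter] at hT ⊢
    exact ⟨mem_univ _, by rw [hg, swapT_card]; exact hT.2.1, hsub T hT.2.2⟩
  · intro T hT
    exact swapT_swapT _ _ hne T

lemma count_eq {n : ℕ} (A B : Finset (Fin n)) (hd : Disjoint A B) (m : ℕ) (hm : A.card ≤ m) :
    (univ.filter (fun T : Finset (Fin n) => (T.card = m ∧ A ⊆ T) ∧ Disjoint B T)).card
      = Nat.choose (n - A.card - B.card) (m - A.card) := by
  have hBsub : B ⊆ univ \ A := fun x hx => by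
    simp only [mem_sdiff, mem_univ, true_and]
    exact fun hxA => (Finset.disjoint_left.mp hd) hxA hx
  have hcard1 : ((univ \ A) \ B).card = n - A.card - B.card := by
    rw [Finset.card_sdiff_of_subset hBsub, Finset.card_sdiff_of_subset (subset_univ A), card_univ,
      Fintype.card_fin]
  have key : (univ.filter (fun T : Finset (Fin n) => (T.card = m ∧ A ⊆ T) ∧ Disjoint B T)).card
      = (Finset.powersetCard (m - A.card) ((univ \ A) \ B)).card := by
    apply Finset.card_bij' (fun T _ => T \ A) (fun S _ => A ∪ S)
    · intro T hT
      simp only [mem_filter] at hT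
      obtain ⟨_, ⟨hcard, hAT⟩, hBT⟩ := hT
      rw [Finset.mem_powersetCard]
      constructor
      · intro x hx
        simp only [mem_sdiff, mem_univ, true_and] at hx ⊢
        exact ⟨hx.2, fun hxB => (Finset.disjoint_left.mp hBT) hxB hx.1⟩
      · rw [Finset.card_sdiff_of_subset hAT, hcard]
    · intro S hS
      rw [Finset.mem_powersetCard] at hS
      obtain ⟨hSsub, hScard⟩ := hS
      have hdisj : Disjoint A S := by
        rw [Finset.disjoint_left]
        intro x hxA hxS
        have := hSsub hxS
        simp only [mem_sdiff, mem_univ, true_and] at this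
        exact this.1 hxA
      simp only [mem_filter, mem_univ, true_and]
      refine ⟨⟨?_, Finset.subset_union_left⟩, ?_⟩
      · rw [Finset.card_union_of_disjoint hdisj, hScard]
        omega
      · rw [Finset.disjoint_right]
        intro x hx hxB
        rcases Finset.mem_union.mp hx with h | h
        · exact (Finset.disjoint_left.mp hd) h hxB
        · have := hSsub h
          simp only [mem_sdiff] at this
          exact this.2 hxB
    · intro T hT
      simp only [mem_filter] at hT
      exact Finset.union_sdiff_of_subset hT.2.1.2
    · intro S hS
      rw [Finset.mem_powersetCard] at hS
      have hdisj : Disjoint A S := by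
        rw [Finset.disjoint_left]
        intro x hxA hxS
        have := hS.1 hxS
        simp only [mem_sdiff, mem_univ, true_and] at this
        exact this.1 hxA
      exact Finset.union_sdiff_cancel_left hdisj
  rw [key, Finset.card_powersetCard, hcard1]
theorem stmt12 (n k t : ℕ) (hkn : k ≤ n) (htk : t ≤ k) (htnk : t ≤ n - k)
    (α : ℕ → ℝ) (a b : Fin t → Fin n) (hinj : Function.Injective (Sum.elim a b))
    (A : Finset (Fin n)) :
    ∑ T ∈ Finset.univ.filter (fun T : Finset (Fin n) => T.card = n - k),
        specV n t a b (n - k) T * (if A ⊆ T then α A.card else 0)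
      = ∑ ℓ ∈ Finset.Icc t (n - k),
          α ℓ * (Nat.choose (n - ℓ - t) (k - t) : ℝ) * specV n t a b ℓ A := by
  classical
  obtain ⟨ha, hb, hab⟩ := inj_facts hinj
  set m := n - k with hmdef
  set ℓ := A.card with hldef
  set P : ℝ := ∏ i, sg a b i A with hPdef
  -- rewrite the LHS as (sum over the combined filter) * α ℓ
  have hLHS : ∑ T ∈ Finset.univ.filter (fun T : Finset (Fin n) => T.card = m),
        specV n t a b m T * (if A ⊆ T then α ℓ else 0)
      = (∑ T ∈ univ.filter (fun T : Finset (Fin n) => T.card = m ∧ A ⊆ T),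
          ∏ i, sg a b i T) * α ℓ := by
    calc ∑ T ∈ filter (fun T : Finset (Fin n) => T.card = m) univ,
            specV n t a b m T * (if A ⊆ T then α ℓ else 0)
        = ∑ T ∈ filter (fun T : Finset (Fin n) => T.card = m) univ,
            (if A ⊆ T then (∏ i, sg a b i T) * α ℓ else 0) := by
          apply Finset.sum_congr rfl
          intro T hT
          simp only [mem_filter] at hT
          rw [specV_eq, if_pos hT.2]
          split_ifs with h
          · rfl
          · exact mul_zero _
      _ = ∑ T ∈ (filter (fun T : Finset (Fin n) => T.card = m) univ).filter (fun T => A ⊆ T),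
            (∏ i, sg a b i T) * α ℓ := (Finset.sum_filter _ _).symm
      _ = ∑ T ∈ filter (fun T : Finset (Fin n) => T.card = m ∧ A ⊆ T) univ,
            (∏ i, sg a b i T) * α ℓ := by rw [Finset.filter_filter]
      _ = (∑ T ∈ filter (fun T : Finset (Fin n) => T.card = m ∧ A ⊆ T) univ,
            ∏ i, sg a b i T) * α ℓ := by rw [Finset.sum_mul]
  rw [hLHS]
  by_cases hsplit : ∀ i : Fin t, (a i ∈ A ∧ b i ∉ A) ∨ (b i ∈ A ∧ a i ∉ A)
  · -- every pair is split by A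
    set pa : Fin t → Fin n := fun i => if a i ∈ A then b i else a i with hpadef
    have hpa1 : ∀ i, a i ∈ A → pa i = b i := fun i h => by rw [hpadef]; simp [h]
    have hpa2 : ∀ i, a i ∉ A → pa i = a i := fun i h => by rw [hpadef]; simp [h]
    have hpaA : ∀ i, pa i ∉ A := by
      intro i
      rcases hsplit i with ⟨h1, h2⟩ | ⟨h1, h2⟩
      · rw [hpa1 i h1]; exact h2
      · rw [hpa2 i h2]; exact h2
    have hpainj : Function.Injective pa := by
      intro i j hij
      by_cases hi : a i ∈ A <;> by_cases hj : a j ∈ A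
      · rw [hpa1 i hi, hpa1 j hj] at hij; exact hb _ _ hij
      · rw [hpa1 i hi, hpa2 j hj] at hij; exact absurd hij.symm (hab j i)
      · rw [hpa2 i hi, hpa1 j hj] at hij; exact absurd hij (hab i j)
      · rw [hpa2 i hi, hpa2 j hj] at hij; exact ha _ _ hij
    set B : Finset (Fin n) := Finset.image pa univ with hBdef
    have hBcard : B.card = t := by
      rw [hBdef, Finset.card_image_of_injective _ hpainj, card_univ, Fintype.card_fin]
    have hdAB : Disjoint A B := by
      rw [Finset.disjoint_right]
      intro x hx hxA
      rw [hBdef, Finset.mem_image] at hx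
      obtain ⟨i, _, rfl⟩ := hx
      exact hpaA i hxA
    have htl : t ≤ ℓ := by
      have : (univ : Finset (Fin t)).card ≤ A.card := by
        apply Finset.card_le_card_of_injOn (fun i => if a i ∈ A then a i else b i)
        · intro i _
          rcases hsplit i with ⟨h1, _⟩ | ⟨h1, h2⟩
          · simp [h1]
          · simp [h2, h1]
        · intro i _ j _ hij
          simp only at hij
          by_cases hi : a i ∈ A <;> by_cases hj : a j ∈ A <;> simp [hi, hj] at hij
          · exact ha _ _ hij
          · exact absurd hij (hab i j)
          · exact absurd hij.symm (hab j i)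
          · exact hb _ _ hij
      rwa [card_univ, Fintype.card_fin] at this
    have hltn : ℓ + t ≤ n := by
      have h1 : (A ∪ B).card = ℓ + t := by
        rw [Finset.card_union_of_disjoint hdAB, hBcard]
      have h2 : (A ∪ B).card ≤ n := by
        have := Finset.card_le_univ (A ∪ B)
        rwa [Fintype.card_fin] at this
      omega
    -- collapse RHS
    rw [Finset.sum_eq_single ℓ]
    · rw [specV_eq, if_pos rfl, ← hPdef]
      by_cases hlm : ℓ ≤ m
      · -- main case
        have hterm : ∀ T ∈ univ.filter (fun T : Finset (Fin n) => T.card = m ∧ A ⊆ T),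
            (∏ i, sg a b i T) = P * ∏ i, (if pa i ∈ T then (0:ℝ) else 1) := by
          intro T hT
          simp only [mem_filter] at hT
          have hAT : A ⊆ T := hT.2.2
          rw [hPdef, ← Finset.prod_mul_distrib]
          apply Finset.prod_congr rfl
          intro i _
          rcases hsplit i with ⟨h1, h2⟩ | ⟨h1, h2⟩
          · have haT : a i ∈ T := hAT h1
            rw [hpa1 i h1]
            by_cases hbT : b i ∈ T <;> simp [sg, h1, h2, haT, hbT]
          · have hbT : b i ∈ T := hAT h1
            rw [hpa2 i h2]
            by_cases haT : a i ∈ T <;> simp [sg, h1, h2, hbT, haT]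
        have hind : ∀ T : Finset (Fin n),
            (∏ i, (if pa i ∈ T then (0:ℝ) else 1)) = if Disjoint B T then 1 else 0 := by
          intro T
          by_cases hD : Disjoint B T
          · rw [if_pos hD]
            apply Finset.prod_eq_one
            intro i _
            rw [if_neg]
            intro hmem
            exact (Finset.disjoint_left.mp hD) (by rw [hBdef]; exact mem_image_of_mem pa (mem_univ i)) hmem
          · rw [if_neg hD]
            rw [Finset.not_disjoint_iff] at hD
            obtain ⟨x, hxB, hxT⟩ := hD
            rw [hBdef, Finset.mem_image] at hxB
            obtain ⟨i, _, rfl⟩ := hxB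
            exact Finset.prod_eq_zero (mem_univ i) (if_pos hxT)
        rw [Finset.sum_congr rfl hterm, ← Finset.mul_sum]
        have hcount : ∑ T ∈ univ.filter (fun T : Finset (Fin n) => T.card = m ∧ A ⊆ T),
            ∏ i, (if pa i ∈ T then (0:ℝ) else 1)
            = ((Nat.choose (n - ℓ - t) (m - ℓ) : ℕ) : ℝ) := by
          calc ∑ T ∈ univ.filter (fun T : Finset (Fin n) => T.card = m ∧ A ⊆ T),
              ∏ i, (if pa i ∈ T then (0:ℝ) else 1)
              = ∑ T ∈ univ.filter (fun T : Finset (Fin n) => T.card = m ∧ A ⊆ T),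
                (if Disjoint B T then (1:ℝ) else 0) := Finset.sum_congr rfl (fun T _ => hind T)
            _ = (((univ.filter (fun T : Finset (Fin n) => T.card = m ∧ A ⊆ T)).filter
                  (fun T => Disjoint B T)).card : ℝ) := by rw [Finset.sum_boole]
            _ = ((Nat.choose (n - ℓ - t) (m - ℓ) : ℕ) : ℝ) := by
                rw [Finset.filter_filter]
                norm_cast
                rw [count_eq A B hdAB m hlm, hBcard]
        rw [hcount]
        have hsymm : Nat.choose (n - ℓ - t) (m - ℓ) = Nat.choose (n - ℓ - t) (k - t) := by
          have h1 : m - ℓ ≤ n - ℓ - t := by omega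
          have h2 : (n - ℓ - t) - (m - ℓ) = k - t := by omega
          rw [← Nat.choose_symm h1, h2]
        rw [hsymm]
        ring
      · -- ℓ > m : both sides vanish
        have hF : univ.filter (fun T : Finset (Fin n) => T.card = m ∧ A ⊆ T) = ∅ := by
          rw [Finset.eq_empty_iff_forall_notMem]
          intro T hT
          simp only [mem_filter] at hT
          have := Finset.card_le_card hT.2.2
          omega
        have hch : Nat.choose (n - ℓ - t) (k - t) = 0 :=
          Nat.choose_eq_zero_of_lt (by omega)
        rw [hF, hch]
        simp
    · -- other terms of the RHS vanish
      intro ℓ' _ hne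
      rw [specV_eq, if_neg (fun h => hne (by rw [← h, hldef])), mul_zero]
    · -- ℓ ∉ Icc t m
      intro hnmem
      rw [Finset.mem_Icc] at hnmem
      have hml : m < ℓ := by omega
      have hch : Nat.choose (n - ℓ - t) (k - t) = 0 :=
        Nat.choose_eq_zero_of_lt (by omega)
      rw [hch]
      simp
  · -- some pair is not split: both sides vanish
    push_neg at hsplit
    obtain ⟨i0, h1, h2⟩ := hsplit
    have hRHS0 : ∑ ℓ' ∈ Finset.Icc t m,
        α ℓ' * (Nat.choose (n - ℓ' - t) (k - t) : ℝ) * specV n t a b ℓ' A = 0 := by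
      apply Finset.sum_eq_zero
      intro ℓ' _
      rw [specV_eq]
      split_ifs with h
      · have hsg0 : sg a b i0 A = 0 := by
          unfold sg
          rw [if_neg (fun hh => hh.2 (h1 hh.1)), if_neg (fun hh => hh.2 (h2 hh.1))]
        rw [Finset.prod_eq_zero (mem_univ i0) hsg0, mul_zero]
      · rw [mul_zero]
    rw [hRHS0]
    by_cases ha0 : a i0 ∈ A
    · have hb0 : b i0 ∈ A := h1 ha0
      have hS0 : ∑ T ∈ univ.filter (fun T : Finset (Fin n) => T.card = m ∧ A ⊆ T),
          ∏ i, sg a b i T = 0 := by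
        apply Finset.sum_eq_zero
        intro T hT
        simp only [mem_filter] at hT
        have hsg0 : sg a b i0 T = 0 := by
          unfold sg
          rw [if_neg (by simp [hT.2.2 hb0]), if_neg (by simp [hT.2.2 ha0])]
        exact Finset.prod_eq_zero (mem_univ i0) hsg0
      rw [hS0, zero_mul]
    · have hb0 : b i0 ∉ A := fun hb0 => ha0 (h2 hb0)
      rw [sum_cancel a b ha hb hab A m i0 ha0 hb0, zero_mul]
end

section
/- Let m = 2^p, let g : [m] → [n], let ℓ ≥ 1 be an integer, and set k = ℓ + p. Define the addressing function f : {0,1}^n × {0,1}^p → {−1,1} by f(y, z) = (−1)^{y_{g(z)}}, where z ∈ {0,1}^p is identified with an element of [m]. Then: (i) if the image of g has size at most ℓ, then f is a k-junta (on n + p variables); and (ii) if g is ε-far from any function with an image of size at most ℓ, then f is (ε′/2)-far from any k-junta, where ε′ = ε − p/k. -/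
/-!
(i) `f` reads only the `p` address bits and the bits `y_a` with `a` in the image of `g`.

(ii) Let `W` be the relevant coordinates of a `k`-junta `h`, with `k = ℓ + p`. Weigh each
`a ∈ [n]` by `|g⁻¹(a)|`; among the addressed coordinates in `W` keep the `ℓ` heaviest, which
carry at least an `ℓ / k` share of their total weight, and redirect every other fibre of `g`
into them. The result has image of size `≤ ℓ` and differs from `g` only on addresses `z` whose
queried bit `y_{g(z)}` lies outside `W`, or on at most `(p / k) 2^p` further addresses. So by
`ε`-farness at least `(ε - p/k) 2^p` addresses query a bit outside `W`. For such `z`, flipping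
`y_{g(z)}` negates `f` but leaves `h` unchanged, so `f ≠ h` on at least half of the
`2^n (ε - p/k) 2^p` inputs with such an address.
-/

open scoped Classical

/-- `h : {0,1}^I → ℝ` is a `k`-junta if it depends on at most `k` coordinates. -/
def IsJunta {I : Type} [Fintype I] (h : (I → Bool) → ℝ) (k : ℕ) : Prop :=
  ∃ W : Finset I, W.card ≤ k ∧ ∀ x y : I → Bool, (∀ i ∈ W, x i = y i) → h x = h y

/-- The addressing function of `g : [m] → [n]` (with `m = 2^p`, an address `z ∈ {0,1}^p`
identified with an element of `[m]`): `f(y,z) = (-1)^{y_{g(z)}}`, on `n + p` variables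
(the `Fin n` summand holds the addressed variables `y`, the `Fin p` summand the address
variables `z`). -/
noncomputable def addrFun (n p : ℕ) (g : (Fin p → Bool) → Fin n) :
    ((Fin n ⊕ Fin p) → Bool) → ℝ :=
  fun x => if x (Sum.inl (g (fun i => x (Sum.inr i)))) then -1 else 1

open Finset Function

namespace Finset

variable {α β : Type*}

section Selection

variable {R : Type*} [DecidableEq α] [Field R] [LinearOrder R] [IsStrictOrderedRing R]

/-- The `l` heaviest elements of `J` carry at least the share `l / #J` of its total weight. -/
theorem exists_subset_card_eq_mul_sum_le (c : α → R) {l : ℕ} {J : Finset α}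
    (hl : l ≤ #J) : ∃ J' ⊆ J, #J' = l ∧ l * ∑ a ∈ J, c a ≤ #J * ∑ a ∈ J', c a := by
  induction l generalizing J with
  | zero => exact ⟨∅, empty_subset J, rfl, by simp⟩
  | succ l ih =>
    rcases hl.eq_or_lt with hJ | hJ
    · exact ⟨J, Subset.rfl, hJ.symm, by rw [hJ]⟩
    obtain ⟨a, haJ, hmax⟩ := J.exists_max_image c (card_pos.mp (by omega))
    have hcard : #(J.erase a) + 1 = #J := card_erase_add_one haJ
    obtain ⟨J', hJ'J, hJ'card, hJ'sum⟩ := ih (J := J.erase a) (by omega)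
    have ha : a ∉ J' := fun h => by simpa using hJ'J h
    refine ⟨insert a J', insert_subset haJ (hJ'J.trans (erase_subset a J)),
      by rw [card_insert_of_notMem ha, hJ'card], ?_⟩
    have hle : ∑ b ∈ J.erase a, c b ≤ #(J.erase a) * c a := by
      simpa using sum_le_card_nsmul _ c (c a) fun b hb => hmax b (mem_of_mem_erase hb)
    have hj : (l : R) + 1 ≤ #(J.erase a) := by exact_mod_cast (by omega : l + 1 ≤ #(J.erase a))
    rw [sum_insert ha, ← add_sum_erase J c haJ, ← hcard]
    push_cast
    refine le_of_mul_le_mul_left ?_ (by linarith : (0 : R) < #(J.erase a))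
    nlinarith [mul_le_mul_of_nonneg_left hJ'sum (by positivity : (0 : R) ≤ #(J.erase a) + 1)]

theorem exists_subset_card_le_mul_sum_sdiff_le {c : α → R} (hc : ∀ a, 0 ≤ c a)
    {ℓ k : ℕ} (hℓk : ℓ ≤ k) {J : Finset α} (hJ : #J ≤ k) :
    ∃ J' ⊆ J, #J' ≤ ℓ ∧ k * ∑ a ∈ J \ J', c a ≤ (k - ℓ) * ∑ a ∈ J, c a := by
  have hsum : 0 ≤ ∑ a ∈ J, c a := sum_nonneg fun a _ => hc a
  have hℓk' : (ℓ : R) ≤ k := by exact_mod_cast hℓk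
  rcases le_or_gt #J ℓ with hJℓ | hℓJ
  · exact ⟨J, Subset.rfl, hJℓ, by simpa using mul_nonneg (sub_nonneg.mpr hℓk') hsum⟩
  obtain ⟨J', hJ'J, hJ'card, hJ'sum⟩ := exists_subset_card_eq_mul_sum_le c hℓJ.le
  refine ⟨J', hJ'J, hJ'card.le, ?_⟩
  rw [← sum_sdiff hJ'J (f := c)] at hJ'sum hsum ⊢
  have hJk : (#J : R) ≤ k := by exact_mod_cast hJ
  have hJpos : (0 : R) < #J := by exact_mod_cast (by omega : 0 < #J)
  refine le_of_mul_le_mul_left ?_ hJpos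
  nlinarith [mul_le_mul_of_nonneg_left hJ'sum (by positivity : (0 : R) ≤ k),
    mul_le_mul_of_nonneg_right (mul_le_mul_of_nonneg_left hJk (Nat.cast_nonneg ℓ)) hsum]

end Selection

theorem card_filter_notMem_le_add_sum [Fintype α] [DecidableEq β] (g : α → β)
    (s t : Finset β) :
    #{z | g z ∉ s} ≤ #{z | g z ∉ t} + ∑ a ∈ t \ s, #{z | g z = a} := by
  rw [sum_card_fiberwise_eq_card_filter]
  refine (card_le_card fun z hz => ?_).trans (card_union_le _ _)
  by_cases hzt : g z ∈ t <;> simp_all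

theorem card_le_two_mul_card_ne_of_involutive [Fintype α] [DecidableEq α]
    [DecidableEq β] {f h : α → β} {σ : α → α} (hσ : Involutive σ) {S : Finset α}
    (hf : ∀ x ∈ S, f (σ x) ≠ f x) (hh : ∀ x ∈ S, h (σ x) = h x) :
    #S ≤ 2 * #{x | f x ≠ h x} := by
  set D : Finset α := {x | f x ≠ h x}
  have hSD : S ⊆ D ∪ D.image σ := by
    intro x hx
    by_cases hfx : f x = h x
    · refine mem_union_right _ (mem_image.mpr ⟨σ x, ?_, hσ x⟩)
      simpa [D, hh x hx, ← hfx] using hf x hx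
    · exact mem_union_left _ (by simpa [D] using hfx)
  calc #S ≤ #D + #(D.image σ) := (card_le_card hSD).trans (card_union_le _ _)
    _ ≤ 2 * #D := by linarith [card_image_le (s := D) (f := σ)]

theorem card_filter_comp_inr {γ : Type*} [Fintype α] [DecidableEq α] [Fintype β]
    [DecidableEq β] [Fintype γ] (P : (β → γ) → Prop) [DecidablePred P] :
    #{x : α ⊕ β → γ | P fun i => x (Sum.inr i)} = Fintype.card (α → γ) * #{z | P z} := by
  rw [← card_univ, ← card_product]
  exact card_equiv (Equiv.sumArrowEquivProdArrow α β γ)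
    (by simp [Equiv.sumArrowEquivProdArrow, comp_def])

end Finset

section Approximation

variable {α β : Type*} [Fintype α] [DecidableEq β]

theorem exists_card_image_le_eq_of_mem [Nonempty α] (g : α → β) {s : Finset β} {ℓ : ℕ}
    (hs : #s ≤ ℓ) (hℓ : 1 ≤ ℓ) :
    ∃ h : α → β, #(univ.image h) ≤ ℓ ∧ ∀ z, g z ∈ s → h z = g z := by
  by_cases hne : s.Nonempty
  · obtain ⟨b, hb⟩ := hne
    refine ⟨fun z => if g z ∈ s then g z else b, (card_le_card ?_).trans hs, fun z hz => if_pos hz⟩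
    intro a ha
    obtain ⟨z, -, rfl⟩ := mem_image.mp ha
    split_ifs with hz
    exacts [hz, hb]
  · refine ⟨fun _ => g (Classical.arbitrary α), ?_, fun z hz => (hne ⟨_, hz⟩).elim⟩
    rwa [image_const univ_nonempty, card_singleton]

theorem exists_card_image_le_mul_card_ne_le [Nonempty α] (g : α → β) {ℓ k : ℕ} (hℓ : 1 ≤ ℓ)
    (hℓk : ℓ ≤ k) {J : Finset β} (hJ : #J ≤ k) :
    ∃ h : α → β, #(univ.image h) ≤ ℓ ∧
      (k : ℝ) * #{z | g z ≠ h z} ≤ k * #{z | g z ∉ J} + (k - ℓ) * Fintype.card α := by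
  -- Keep the `ℓ` values of `J` with the largest fibres and redirect every other fibre into them.
  obtain ⟨J', hJ'J, hJ'card, hweight⟩ : ∃ J' ⊆ J, #J' ≤ ℓ ∧
      (k : ℝ) * ∑ a ∈ J \ J', (#{z | g z = a} : ℝ) ≤ (k - ℓ) * ∑ a ∈ J, (#{z | g z = a} : ℝ) :=
    exists_subset_card_le_mul_sum_sdiff_le (fun _ => Nat.cast_nonneg _) hℓk hJ
  obtain ⟨h, himg, hagree⟩ := exists_card_image_le_eq_of_mem g hJ'card hℓ
  refine ⟨h, himg, ?_⟩
  have hne : #{z | g z ≠ h z} ≤ #{z | g z ∉ J'} :=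
    card_le_card fun z => by simpa using mt fun hz => (hagree z hz).symm
  have htotal : ∑ a ∈ J, (#{z | g z = a} : ℝ) ≤ Fintype.card α := by
    exact_mod_cast (sum_card_fiberwise_eq_card_filter _ J g).trans_le (card_le_univ _)
  have hk : (0 : ℝ) ≤ k := Nat.cast_nonneg k
  have hkℓ : (0 : ℝ) ≤ k - ℓ := sub_nonneg.mpr (by exact_mod_cast hℓk)
  have hsplit : (#{z | g z ≠ h z} : ℝ) ≤ #{z | g z ∉ J} + ∑ a ∈ J \ J', (#{z | g z = a} : ℝ) := by
    exact_mod_cast hne.trans (card_filter_notMem_le_add_sum g J' J)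
  linarith [mul_le_mul_of_nonneg_left hsplit hk, mul_le_mul_of_nonneg_left htotal hkℓ]

end Approximation

section Addressing

variable {n p : ℕ} (g : (Fin p → Bool) → Fin n)

theorem isJunta_addrFun {ℓ : ℕ} (himg : #(univ.image g) ≤ ℓ) :
    IsJunta (addrFun n p g) (ℓ + p) := by
  refine ⟨(univ.image g).disjSum univ, by simpa [card_disjSum] using himg, fun x y hxy => ?_⟩
  have haddr : (fun i => x (Sum.inr i)) = fun i => y (Sum.inr i) :=
    funext fun i => hxy _ (inr_mem_disjSum.mpr (mem_univ i))
  simp only [addrFun, haddr, hxy _ (inl_mem_disjSum.mpr (mem_image_of_mem g (mem_univ _)))]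

def flipAddressed (x : Fin n ⊕ Fin p → Bool) : Fin n ⊕ Fin p → Bool :=
  update x (Sum.inl (g fun i => x (Sum.inr i))) (!x (Sum.inl (g fun i => x (Sum.inr i))))

@[simp]
theorem flipAddressed_inr (x : Fin n ⊕ Fin p → Bool) (i : Fin p) :
    flipAddressed g x (Sum.inr i) = x (Sum.inr i) := by
  simp [flipAddressed]

theorem flipAddressed_involutive : Involutive (flipAddressed g) := by
  intro x
  simp [flipAddressed]

theorem addrFun_flipAddressed (x : Fin n ⊕ Fin p → Bool) :
    addrFun n p g (flipAddressed g x) = -addrFun n p g x := by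
  have hflip : flipAddressed g x (Sum.inl (g fun i => x (Sum.inr i))) =
      !x (Sum.inl (g fun i => x (Sum.inr i))) := by
    simp [flipAddressed]
  simp only [addrFun, flipAddressed_inr, hflip]
  cases x (Sum.inl (g fun i => x (Sum.inr i))) <;> norm_num

theorem two_pow_mul_card_le_two_mul_card_addrFun_ne {h : (Fin n ⊕ Fin p → Bool) → ℝ}
    {W : Finset (Fin n ⊕ Fin p)} (hW : ∀ x y, (∀ i ∈ W, x i = y i) → h x = h y) :
    2 ^ n * #{z | Sum.inl (g z) ∉ W} ≤ 2 * #{x | addrFun n p g x ≠ h x} := by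
  have hcube : Fintype.card (Fin n → Bool) = 2 ^ n := by simp
  rw [← hcube, ← card_filter_comp_inr fun z => Sum.inl (g z) ∉ W]
  refine card_le_two_mul_card_ne_of_involutive (flipAddressed_involutive g) ?_ fun x hx => ?_
  · intro x _
    rw [addrFun_flipAddressed]
    unfold addrFun
    split_ifs <;> norm_num
  · refine hW _ _ fun i hi => update_of_ne ?_ _ _
    rintro rfl
    exact (mem_filter.mp hx).2 hi

end Addressing

theorem stmt13 (n p ℓ : ℕ) (hℓ : 1 ≤ ℓ) (ε : ℝ) (g : (Fin p → Bool) → Fin n) :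
    -- (i) if the image of g has size at most ℓ, then f is a (ℓ + p)-junta
    ((Finset.univ.image g).card ≤ ℓ → IsJunta (addrFun n p g) (ℓ + p)) ∧
    -- (ii) if g is ε-far from any function with image of size at most ℓ,
    -- then f is (ε'/2)-far from any (ℓ + p)-junta, where ε' = ε - p/(ℓ + p)
    ((∀ h : (Fin p → Bool) → Fin n, (Finset.univ.image h).card ≤ ℓ →
        ε * 2^p ≤ ((Finset.univ.filter (fun z : Fin p → Bool => g z ≠ h z)).card : ℝ)) →
      ∀ h : ((Fin n ⊕ Fin p) → Bool) → ℝ, (∀ x, h x = 1 ∨ h x = -1) →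
        IsJunta h (ℓ + p) →
        ((ε - (p:ℝ) / ((ℓ:ℝ) + p)) / 2) * 2^(n + p)
          ≤ ((Finset.univ.filter
                (fun x : (Fin n ⊕ Fin p) → Bool => addrFun n p g x ≠ h x)).card : ℝ)) := by
  refine ⟨isJunta_addrFun g, fun hfar h _ ⟨W, hWcard, hW⟩ => ?_⟩
  obtain ⟨h', himg, hclose⟩ := exists_card_image_le_mul_card_ne_le g hℓ (Nat.le_add_right ℓ p)
    (card_toLeft_le.trans hWcard)
  have hflip : (2 : ℝ) ^ n * #{z | Sum.inl (g z) ∉ W} ≤ 2 * #{x | addrFun n p g x ≠ h x} := by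
    exact_mod_cast two_pow_mul_card_le_two_mul_card_addrFun_ne g hW
  have hdist := hfar h' himg
  simp only [mem_toLeft, Fintype.card_fun, Fintype.card_bool, Fintype.card_fin] at hclose
  push_cast at hclose
  have hk : (0 : ℝ) < ℓ + p := by positivity
  have hB : (ε - p / (ℓ + p)) * 2 ^ p ≤ #{z | Sum.inl (g z) ∉ W} := by
    rw [sub_mul, div_mul_eq_mul_div, sub_le_iff_le_add, ← sub_le_iff_le_add', le_div_iff₀ hk]
    linarith [mul_le_mul_of_nonneg_left hdist hk.le]
  rw [pow_add]
  linarith [mul_le_mul_of_nonneg_left hB (by positivity : (0 : ℝ) ≤ 2 ^ n)]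
end

section
/- Let m ≥ 1, n ≥ 1, and let h : [m] → [n] be a function whose image has size at most k, and let ℓ be an integer with 1 ≤ ℓ ≤ k. Then there exists a function h′ : [m] → [n] whose image has size at most ℓ such that |{z ∈ [m] : h(z) ≠ h′(z)}| ≤ ((k − ℓ)/k)·m. -/
/-!
Keep the `ℓ` most popular values of `h` and send every other input to one of them. Discarding a
least popular value from a set of `j` values keeps at least a `(j - 1) / j` fraction of the inputs
mapped into it, so by induction the `ℓ` kept values receive at least an `ℓ / s ≥ ℓ / k` fraction of
all inputs, where `s ≤ k` is the size of the image.
-/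

open Finset

namespace Finset

variable {ι R : Type*} [CommRing R] [LinearOrder R] [IsStrictOrderedRing R]

theorem exists_mem_mul_sum_le_mul_sum_erase (a : ι → R) [DecidableEq ι] {T : Finset ι} {ℓ : ℕ}
    (hT : #T = ℓ + 1) :
    ∃ y ∈ T, ℓ * ∑ i ∈ T, a i ≤ (ℓ + 1) * ∑ i ∈ T.erase y, a i := by
  obtain ⟨y, hyT, hy⟩ := T.exists_min_image a (card_pos.1 (by omega))
  have hmin : (ℓ + 1 : R) * a y ≤ ∑ i ∈ T, a i := by
    simpa [hT] using T.card_nsmul_le_sum a (a y) hy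
  refine ⟨y, hyT, ?_⟩
  rw [← add_sum_erase T a hyT] at hmin ⊢
  linarith

theorem exists_subset_card_eq_mul_sum_le_s14 (a : ι → R) {S : Finset ι} {ℓ : ℕ} (hℓ : ℓ ≤ #S) :
    ∃ T ⊆ S, #T = ℓ ∧ ℓ * ∑ i ∈ S, a i ≤ #S * ∑ i ∈ T, a i := by
  classical
  induction hℓ using Nat.decreasingInduction with
  | self => exact ⟨S, Subset.rfl, rfl, le_rfl⟩
  | of_succ ℓ _ ih =>
    obtain ⟨T, hTS, hT, hsum⟩ := ih
    obtain ⟨y, hyT, hy⟩ := exists_mem_mul_sum_le_mul_sum_erase a hT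
    refine ⟨T.erase y, (erase_subset y T).trans hTS, by rw [card_erase_of_mem hyT, hT]; rfl, ?_⟩
    push_cast at hsum
    have hℓ : (0 : R) ≤ ℓ := Nat.cast_nonneg ℓ
    have hS : (0 : R) ≤ #S := Nat.cast_nonneg _
    refine le_of_mul_le_mul_left ?_ (by positivity : (0 : R) < ℓ + 1)
    calc ((ℓ : R) + 1) * (ℓ * ∑ i ∈ S, a i) = ℓ * ((ℓ + 1) * ∑ i ∈ S, a i) := by ring
      _ ≤ ℓ * (#S * ∑ i ∈ T, a i) := mul_le_mul_of_nonneg_left hsum hℓ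
      _ = #S * (ℓ * ∑ i ∈ T, a i) := by ring
      _ ≤ #S * ((ℓ + 1) * ∑ i ∈ T.erase y, a i) := mul_le_mul_of_nonneg_left hy hS
      _ = (ℓ + 1) * (#S * ∑ i ∈ T.erase y, a i) := by ring

end Finset

section

variable {α β : Type*} [Fintype α] [DecidableEq β]

theorem exists_image_subset_and_filter_ne_subset (h : α → β) {T : Finset β} (hT : T.Nonempty) :
    ∃ h' : α → β, univ.image h' ⊆ T ∧
      univ.filter (fun z => h z ≠ h' z) ⊆ univ.filter (fun z => h z ∉ T) := by
  obtain ⟨y₀, hy₀⟩ := hT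
  refine ⟨fun z => if h z ∈ T then h z else y₀, ?_, ?_⟩
  · intro y hy
    obtain ⟨z, -, rfl⟩ := mem_image.1 hy
    split_ifs with hz <;> assumption
  · intro z hz
    simp only [mem_filter, mem_univ, true_and] at hz ⊢
    exact fun hzT => hz (if_pos hzT).symm

theorem exists_card_image_le_and_mul_card_filter_ne_le (h : α → β) {k ℓ : ℕ} (hℓ : 0 < ℓ)
    (hℓk : ℓ ≤ k) (hk : #(univ.image h) ≤ k) :
    ∃ h' : α → β, #(univ.image h') ≤ ℓ ∧
      (k : ℝ) * #{z | h z ≠ h' z} ≤ (k - ℓ) * Fintype.card α := by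
  by_cases hS : #(univ.image h) ≤ ℓ
  · refine ⟨h, hS, ?_⟩
    have hkℓ : (ℓ : ℝ) ≤ k := by exact_mod_cast hℓk
    simpa using mul_nonneg (sub_nonneg.2 hkℓ) (Nat.cast_nonneg (Fintype.card α))
  obtain ⟨T, -, hT, hsum⟩ := exists_subset_card_eq_mul_sum_le_s14
    (fun y => (#{z | h z = y} : ℝ)) (not_le.1 hS).le
  rw [← Nat.cast_sum, ← Nat.cast_sum, sum_card_fiberwise_eq_card_filter univ T h,
    ← card_eq_sum_card_image, card_univ] at hsum
  obtain ⟨h', himage, hne⟩ := exists_image_subset_and_filter_ne_subset h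
    (card_pos.1 (hT ▸ hℓ))
  refine ⟨h', hT ▸ card_le_card himage, ?_⟩
  have hcompl : (#{z | h z ∈ T} : ℝ) + #{z | h z ∉ T} = Fintype.card α := by
    exact_mod_cast card_filter_add_card_filter_not (s := univ) (fun z => h z ∈ T)
  have hkept : (ℓ : ℝ) * Fintype.card α ≤ k * #{z | h z ∈ T} :=
    hsum.trans (mul_le_mul_of_nonneg_right (by exact_mod_cast hk) (Nat.cast_nonneg _))
  calc (k : ℝ) * #{z | h z ≠ h' z} ≤ k * #{z | h z ∉ T} :=
        mul_le_mul_of_nonneg_left (by exact_mod_cast card_le_card hne) (Nat.cast_nonneg k)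
    _ = k * Fintype.card α - k * #{z | h z ∈ T} := by rw [← hcompl]; ring
    _ ≤ (k - ℓ) * Fintype.card α := by linarith

end

open scoped Classical

theorem stmt14_general (m n k ℓ : ℕ) (hℓ : 1 ≤ ℓ) (hℓk : ℓ ≤ k)
    (h : Fin m → Fin n) (hh : (Finset.univ.image h).card ≤ k) :
    ∃ h' : Fin m → Fin n, (Finset.univ.image h').card ≤ ℓ ∧
      ((Finset.univ.filter (fun z : Fin m => h z ≠ h' z)).card : ℝ)
        ≤ (((k:ℝ) - ℓ) / k) * m := by
  obtain ⟨h', himage, hdiff⟩ := exists_card_image_le_and_mul_card_filter_ne_le h hℓ hℓk hh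
  refine ⟨h', himage, ?_⟩
  have hk : (0 : ℝ) < k := Nat.cast_pos.2 (hℓ.trans hℓk)
  rw [Fintype.card_fin] at hdiff
  rw [div_mul_eq_mul_div, le_div_iff₀ hk]
  linarith

theorem stmt14 (m n k ℓ : ℕ) (hm : 1 ≤ m) (hn : 1 ≤ n) (hℓ : 1 ≤ ℓ) (hℓk : ℓ ≤ k)
    (h : Fin m → Fin n) (hh : (Finset.univ.image h).card ≤ k) :
    ∃ h' : Fin m → Fin n, (Finset.univ.image h').card ≤ ℓ ∧
      ((Finset.univ.filter (fun z : Fin m => h z ≠ h' z)).card : ℝ)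
        ≤ (((k:ℝ) - ℓ) / k) * m :=
  stmt14_general m n k ℓ hℓ hℓk h hh
end

section
/- Let D ⊆ {0,1}^n be finite, F : D → {0,1}, and for each j ∈ [n] let X_j be a real positive semidefinite matrix with rows and columns indexed by D, such that for all x, y ∈ D with F(x) ≠ F(y) one has ∑_{j : x_j ≠ y_j} X_j[x,y] = 1. Then there exist real positive semidefinite matrices X′_j indexed by D such that X′_j[z,z] = X_j[z,z] for all z ∈ D and all j ∈ [n], and for all x, y ∈ D with F(x) ≠ F(y): X′_j[x,y] = 0 for every j with x_j = y_j, and ∑_{j∈[n]} X′_j[x,y] = 1. -/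
open scoped Classical

theorem stmt15 (n : ℕ) (D : Finset (Fin n → Bool)) (F : {x // x ∈ D} → Bool)
    (X : Fin n → Matrix {x // x ∈ D} {x // x ∈ D} ℝ)
    (hpsd : ∀ j, (X j).PosSemidef)
    (hfeas : ∀ x y : {x // x ∈ D}, F x ≠ F y →
      ∑ j ∈ Finset.univ.filter (fun j : Fin n => x.1 j ≠ y.1 j), X j x y = 1) :
    ∃ X' : Fin n → Matrix {x // x ∈ D} {x // x ∈ D} ℝ,
      (∀ j, (X' j).PosSemidef) ∧
      (∀ j, ∀ z : {x // x ∈ D}, X' j z z = X j z z) ∧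
      (∀ x y : {x // x ∈ D}, F x ≠ F y →
        (∀ j, x.1 j = y.1 j → X' j x y = 0) ∧ ∑ j : Fin n, X' j x y = 1) := by
  classical
  -- label g j x = x_j XOR F x
  set g : Fin n → {x // x ∈ D} → Bool := fun j x => xor (x.1 j) (F x) with hg
  -- projections
  set P : Fin n → Bool → Matrix {x // x ∈ D} {x // x ∈ D} ℝ :=
    fun j b => Matrix.diagonal (fun x => if g j x = b then (1:ℝ) else 0) with hP
  refine ⟨fun j => ∑ b : Bool, P j b * X j * P j b, ?_, ?_, ?_⟩
  · intro j
    dsimp only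
    rw [Fintype.sum_bool]
    have hPh : ∀ b, Matrix.conjTranspose (P j b) = P j b := fun b => by
      simp [hP, Matrix.diagonal_conjTranspose]
    refine Matrix.PosSemidef.add ?_ ?_
    · have h := (hpsd j).mul_mul_conjTranspose_same (P j true); rwa [hPh] at h
    · have h := (hpsd j).mul_mul_conjTranspose_same (P j false); rwa [hPh] at h
  · intro j z
    dsimp only
    simp [hP, Matrix.sum_apply, Matrix.mul_apply, Matrix.diagonal_apply,
      Finset.sum_ite_eq, Finset.sum_ite_eq', Matrix.mul_diagonal, Matrix.diagonal_mul]
  · intro x y hFxy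
    dsimp only
    have hentry : ∀ j, (∑ b : Bool, P j b * X j * P j b) x y
        = if g j x = g j y then X j x y else 0 := by
      intro j
      simp only [Matrix.sum_apply, hP, Matrix.mul_diagonal, Matrix.diagonal_mul,
        Fintype.sum_bool]
      cases hgx : g j x <;> cases hgy : g j y <;> simp
    have hxor : ∀ j, (g j x = g j y) ↔ (x.1 j ≠ y.1 j) := by
      intro j
      simp only [hg]
      cases hx : x.1 j <;> cases hy : y.1 j <;>
        cases hFx : F x <;> cases hFy : F y <;> simp_all
    constructor
    · intro j hxy
      rw [hentry j, if_neg]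
      rw [hxor j]
      simp [hxy]
    · calc ∑ j : Fin n, (∑ b : Bool, P j b * X j * P j b) x y
          = ∑ j : Fin n, if x.1 j ≠ y.1 j then X j x y else 0 := by
            refine Finset.sum_congr rfl fun j _ => ?_
            rw [hentry j]
            by_cases h : x.1 j = y.1 j
            · rw [if_neg, if_neg] <;> simp [hxor, h]
            · rw [if_pos, if_pos] <;> simp [hxor, h]
        _ = ∑ j ∈ Finset.univ.filter (fun j : Fin n => x.1 j ≠ y.1 j), X j x y := by
            rw [Finset.sum_filter]
        _ = 1 := hfeas x y hFxy
end

section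
/- Let n ≥ 1 and let D = {z ∈ {0,1}^n : |z| ≥ n−1}, where |z| is the Hamming weight, and let F : D → {0,1} be the AND function (F(z) = 1 iff z = 1^n). For j ∈ [n] define ψ_j : D → ℝ by ψ_j(1^n) = n^{−1/4}; ψ_j(z) = n^{1/4} if |z| = n−1 and z_j = 0; and ψ_j(z) = 0 if |z| = n−1 and z_j = 1. Then the rank-one positive semidefinite matrices X_j = ψ_j ψ_j^T satisfy: for all x, y ∈ D with F(x) ≠ F(y), ∑_{j : x_j ≠ y_j} X_j[x,y] = 1; and for every z ∈ D, ∑_{j∈[n]} X_j[z,z] = √n. -/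
open scoped Classical

/-- The domain `D = {z ∈ {0,1}^n : |z| ≥ n-1}`, where `|z|` is the Hamming weight. -/
abbrev DsetAND (n : ℕ) :=
  {z : Fin n → Bool // n - 1 ≤ (Finset.univ.filter (fun i => z i = true)).card}

/-- The vector `ψ_j` on `D`: `ψ_j(1^n) = n^{-1/4}`; `ψ_j(z) = n^{1/4}` if `|z| = n-1` and
`z_j = 0`; and `ψ_j(z) = 0` if `|z| = n-1` and `z_j = 1`. -/
noncomputable def psiAND (n : ℕ) (j : Fin n) (z : DsetAND n) : ℝ :=
  if ∀ i, z.1 i = true then (n:ℝ) ^ (-(1/4 : ℝ))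
  else if z.1 j = false then (n:ℝ) ^ ((1/4 : ℝ))
  else 0

/-! On `D` an input other than `1^n` has exactly one zero coordinate `j₀`, and there `ψ_j`
vanishes unless `j = j₀`. So for `F x ≠ F y` the only index where `x` and `y` differ is the zero
coordinate of the non-`1^n` input, contributing `n^{-1/4} · n^{1/4} = 1`; the diagonal sum is
`n^{1/4} · n^{1/4} = √n` off `1^n` and `n · n^{-1/4} · n^{-1/4} = √n` at `1^n`. Each `X_j` is the
outer product `ψ_j ψ_jᵀ`, hence positive semidefinite. -/

theorem eq_of_card_sub_one_le_card_filter {ι : Type*} [Fintype ι] {p : ι → Prop}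
    [DecidablePred p] (h : Fintype.card ι - 1 ≤ (Finset.univ.filter p).card) {i j : ι}
    (hi : ¬ p i) (hj : ¬ p j) : i = j := by
  by_contra hij
  have hpair : ({i, j} : Finset ι) ⊆ Finset.univ.filter (fun k => ¬ p k) := by
    simp [Finset.insert_subset_iff, hi, hj]
  have hcard := Finset.card_le_card hpair
  rw [Finset.card_pair hij] at hcard
  have := Finset.card_filter_add_card_filter_not (s := Finset.univ) p
  rw [Finset.card_univ] at this
  omega

theorem rpow_neg_quarter_mul_rpow_quarter {x : ℝ} (hx : 0 < x) :
    x ^ (-(1/4 : ℝ)) * x ^ (1/4 : ℝ) = 1 := by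
  rw [← Real.rpow_add hx]; norm_num

theorem rpow_quarter_mul_self {x : ℝ} (hx : 0 ≤ x) :
    x ^ (1/4 : ℝ) * x ^ (1/4 : ℝ) = √x := by
  rw [← Real.rpow_add' hx (by norm_num), Real.sqrt_eq_rpow]; norm_num

theorem mul_rpow_neg_quarter_mul_self {x : ℝ} (hx : 0 ≤ x) :
    x * (x ^ (-(1/4 : ℝ)) * x ^ (-(1/4 : ℝ))) = √x := by
  conv_lhs => enter [1]; rw [← Real.rpow_one x]
  rw [← Real.rpow_add' hx (by norm_num), ← Real.rpow_add' hx (by norm_num), Real.sqrt_eq_rpow]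
  norm_num

namespace DsetAND

variable {n : ℕ}

theorem eq_of_eq_false (z : DsetAND n) {i j : Fin n} (hi : z.1 i = false)
    (hj : z.1 j = false) : i = j :=
  eq_of_card_sub_one_le_card_filter (by simpa using z.2) (by simp [hi]) (by simp [hj])

theorem exists_eq_false {z : DsetAND n} (hz : ¬ ∀ i, z.1 i = true) : ∃ j, z.1 j = false := by
  simpa using hz

end DsetAND

section psiAND

variable {n : ℕ} {j : Fin n} {z : DsetAND n}

theorem psiAND_of_forall_true (hz : ∀ i, z.1 i = true) : psiAND n j z = (n : ℝ) ^ (-(1/4 : ℝ)) :=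
  if_pos hz

theorem psiAND_of_eq_false (hj : z.1 j = false) : psiAND n j z = (n : ℝ) ^ (1/4 : ℝ) := by
  have hz : ¬ ∀ i, z.1 i = true := fun h => by simp [h j] at hj
  simp [psiAND, hz, hj]

theorem psiAND_of_ne {j₀ : Fin n} (hj₀ : z.1 j₀ = false) (hj : j ≠ j₀) : psiAND n j z = 0 := by
  have hz : ¬ ∀ i, z.1 i = true := fun h => by simp [h j₀] at hj₀
  have : z.1 j = true := by
    by_contra h
    exact hj (z.eq_of_eq_false (by simpa using h) hj₀)
  simp [psiAND, hz, this]

theorem sum_psiAND_mul_of_forall_true {x y : DsetAND n} (hx : ∀ i, x.1 i = true)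
    (hy : ¬ ∀ i, y.1 i = true) :
    ∑ j ∈ Finset.univ.filter (fun j => x.1 j ≠ y.1 j), psiAND n j x * psiAND n j y = 1 := by
  obtain ⟨j₀, hj₀⟩ := DsetAND.exists_eq_false hy
  have hdiff : Finset.univ.filter (fun j => x.1 j ≠ y.1 j) = {j₀} := by
    ext j
    simp only [Finset.mem_filter, Finset.mem_univ, true_and, Finset.mem_singleton, hx, ne_eq,
      eq_comm (a := true), Bool.not_eq_true]
    exact ⟨fun hj => y.eq_of_eq_false hj hj₀, fun h => h ▸ hj₀⟩
  rw [hdiff, Finset.sum_singleton, psiAND_of_forall_true hx, psiAND_of_eq_false hj₀]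
  exact rpow_neg_quarter_mul_rpow_quarter (by exact_mod_cast j₀.pos)

theorem sum_psiAND_mul_self (z : DsetAND n) : ∑ j, psiAND n j z * psiAND n j z = √n := by
  by_cases hz : ∀ i, z.1 i = true
  · simp only [psiAND_of_forall_true hz, Finset.sum_const, Finset.card_univ, Fintype.card_fin,
      nsmul_eq_mul]
    exact mul_rpow_neg_quarter_mul_self n.cast_nonneg
  · obtain ⟨j₀, hj₀⟩ := DsetAND.exists_eq_false hz
    rw [Finset.sum_eq_single_of_mem j₀ (Finset.mem_univ _)
      (fun j _ hj => by rw [psiAND_of_ne hj₀ hj, zero_mul]), psiAND_of_eq_false hj₀]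
    exact rpow_quarter_mul_self n.cast_nonneg

end psiAND

theorem stmt16_general (n : ℕ) :
    (∀ j : Fin n,
      (Matrix.of (fun x y : DsetAND n => psiAND n j x * psiAND n j y)).PosSemidef) ∧
    (∀ x y : DsetAND n, ¬((∀ i, x.1 i = true) ↔ (∀ i, y.1 i = true)) →
      ∑ j ∈ Finset.univ.filter (fun j : Fin n => x.1 j ≠ y.1 j),
        psiAND n j x * psiAND n j y = 1) ∧
    (∀ z : DsetAND n, ∑ j : Fin n, psiAND n j z * psiAND n j z = Real.sqrt n) := by
  refine ⟨fun j => Matrix.posSemidef_vecMulVec_self_star (psiAND n j), fun x y hxy => ?_,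
    sum_psiAND_mul_self⟩
  by_cases hx : ∀ i, x.1 i = true
  · exact sum_psiAND_mul_of_forall_true hx fun hy => hxy (iff_of_true hx hy)
  · have hy : ∀ i, y.1 i = true := by
      by_contra hy
      exact hxy (iff_of_false hx hy)
    simp_rw [ne_comm (a := x.1 _), mul_comm (psiAND n _ x)]
    exact sum_psiAND_mul_of_forall_true hy hx

theorem stmt16 (n : ℕ) (hn : 1 ≤ n) :
    (∀ j : Fin n,
      (Matrix.of (fun x y : DsetAND n => psiAND n j x * psiAND n j y)).PosSemidef) ∧
    (∀ x y : DsetAND n, ¬((∀ i, x.1 i = true) ↔ (∀ i, y.1 i = true)) →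
      ∑ j ∈ Finset.univ.filter (fun j : Fin n => x.1 j ≠ y.1 j),
        psiAND n j x * psiAND n j y = 1) ∧
    (∀ z : DsetAND n, ∑ j : Fin n, psiAND n j z * psiAND n j z = Real.sqrt n) :=
  stmt16_general n
end

section
/- For all integers k ≥ 2 and d ≥ 1, one has (1 − 1/k)^k − (1 − 1/k)^{k+d} ≥ (1/8)·min{1, d/k}. -/
/-!
Write `y = 1 - 1/k` and `m = min d k`, so that `min 1 (d/k) = m/k`. The difference is
`y^k (1 - y^d) ≥ y^k (1 - y^m)`. Convexity of `exp` gives `1 - x ≥ 4^(-x)` on `[0, 1/2]`,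
hence `y^k ≥ 1/4`; and an induction gives `(1 - x)^m ≤ 1 - m x / 2` whenever `m x ≤ 1`,
hence `1 - y^m ≥ m/(2k)`.
-/

open Real

theorem one_sub_pow_le_one_sub_mul_div_two {x : ℝ} (hx : 0 ≤ x) :
    ∀ {m : ℕ}, m * x ≤ 1 → (1 - x) ^ m ≤ 1 - m * x / 2
  | 0, _ => by simp
  | m + 1, hm => by
    push_cast at hm ⊢
    have hmx : m * x ≤ 1 := by nlinarith
    calc (1 - x) ^ (m + 1) = (1 - x) ^ m * (1 - x) := pow_succ _ _
      _ ≤ (1 - m * x / 2) * (1 - x) :=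
          mul_le_mul_of_nonneg_right (one_sub_pow_le_one_sub_mul_div_two hx hmx) (by nlinarith)
      _ ≤ 1 - (m + 1) * x / 2 := by nlinarith

theorem exp_neg_two_mul_log_two_mul_le_one_sub {x : ℝ} (hx₀ : 0 ≤ x) (hx₁ : x ≤ 1 / 2) :
    exp (-(2 * log 2 * x)) ≤ 1 - x := by
  have h := convexOn_exp.2 (Set.mem_univ 0) (Set.mem_univ (-log 2))
    (by linarith : 0 ≤ 1 - 2 * x) (by linarith : 0 ≤ 2 * x) (by ring)
  simp only [smul_eq_mul, mul_zero, zero_add, exp_zero, mul_one, exp_neg, exp_log two_pos] at h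
  calc exp (-(2 * log 2 * x)) = exp (2 * x * -log 2) := by ring_nf
    _ ≤ 1 - 2 * x + 2 * x * 2⁻¹ := h
    _ = 1 - x := by ring

theorem quarter_le_one_sub_inv_pow {k : ℕ} (hk : 2 ≤ k) : 1 / 4 ≤ (1 - 1 / (k : ℝ)) ^ k := by
  have hk' : (2 : ℝ) ≤ k := by exact_mod_cast hk
  calc (1 / 4 : ℝ) = exp (-(2 * log 2 * (1 / k))) ^ k := by
        rw [← exp_nat_mul, show (k : ℝ) * -(2 * log 2 * (1 / k)) = -log 4 by
          rw [show (4 : ℝ) = 2 ^ 2 by norm_num, log_pow]; field_simp; push_cast; ring,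
          exp_neg, exp_log (by norm_num)]
        norm_num
    _ ≤ (1 - 1 / (k : ℝ)) ^ k := by
        gcongr
        exact exp_neg_two_mul_log_two_mul_le_one_sub (by positivity)
            (by rw [div_le_div_iff₀ (by positivity) two_pos]; linarith)

theorem stmt17_general (k d : ℕ) (hk : 2 ≤ k) :
    (1/8 : ℝ) * min 1 ((d:ℝ) / k)
      ≤ (1 - 1/(k:ℝ))^k - (1 - 1/(k:ℝ))^(k + d) := by
  set y : ℝ := 1 - 1 / (k : ℝ)
  have hk₀ : (0 : ℝ) < k := by positivity
  have hy₀ : 0 ≤ y := by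
    rw [sub_nonneg, div_le_one hk₀]; exact_mod_cast (by omega : 1 ≤ k)
  have hy₁ : y ≤ 1 := sub_le_self _ (by positivity)
  set m := min d k
  have hmin : min 1 ((d : ℝ) / k) = m / k := by
    rw [Nat.cast_min, ← min_div_div_right hk₀.le, div_self hk₀.ne', min_comm]
  have hgap : (m : ℝ) / k / 2 ≤ 1 - y ^ d := calc
    (m : ℝ) / k / 2 ≤ 1 - y ^ m := by
      have := one_sub_pow_le_one_sub_mul_div_two (x := 1 / (k : ℝ)) (by positivity) (m := m)
        (by rw [mul_one_div, div_le_one hk₀]; exact_mod_cast min_le_right d k)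
      rw [mul_one_div] at this; linarith
    _ ≤ 1 - y ^ d := by gcongr 1 - ?_; exact pow_le_pow_of_le_one hy₀ hy₁ (min_le_left d k)
  calc (1 / 8 : ℝ) * min 1 ((d : ℝ) / k) = 1 / 4 * ((m : ℝ) / k / 2) := by rw [hmin]; ring
    _ ≤ y ^ k * (1 - y ^ d) := by gcongr; exact quarter_le_one_sub_inv_pow hk
    _ = y ^ k - y ^ (k + d) := by ring

theorem stmt17 (k d : ℕ) (hk : 2 ≤ k) (hd : 1 ≤ d) :
    (1/8 : ℝ) * min 1 ((d:ℝ) / k)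
      ≤ (1 - 1/(k:ℝ))^k - (1 - 1/(k:ℝ))^(k + d) :=
  stmt17_general k d hk
end
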